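/- arXiv:2010.00076 — 16 statements merged into one kernel-verified Lean document; each statement's English description precedes it below -/
import Mathlib

section
/- Let n ≥ 1, let Δ ∈ ℂ with Δ ≠ 0, and let c ∈ ℂ satisfy c² = −1/Δ. Let D ⊆ ℂ be open, let w_0,…,w_{2n} : D → ℂ be differentiable, and let a_0,…,a_{2n} ∈ ℂ. Define f_i(z) := c·(w_i(cz) + w_{i+1}(cz)) (indices mod 2n+1) and α_i := c²·a_i. Then (w_0,…,w_{2n} | a_0,…,a_{2n}) satisfies the (2n+1)-cyclic dressing chain equations with shift Δ together with the first integral w_0(z) + ⋯ + w_{2n}(z) = −Δz/2 for all z ∈ D, if and only if (f_0,…,f_{2n} | α_0,…,α_{2n}) satisfies the A_{2n}-Painlevé system together with its normalizations f_0(z) + ⋯ + f_{2n}(z) = z and α_0 + ⋯ + α_{2n} = 1, at every z with cz ∈ D. -/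
open Fin.NatCast

/-!
Write `g_i = w_i + w_{i+1}` and `f_i(z) = c g_i(cz)`. Then `f_i' (z) = c² g_i'(cz)`, and the
alternating sum `f_{i+1} - f_{i+2} + ⋯ - f_{i+2n}` telescopes, cyclically, to
`c (w_{i+1} - w_i)(cz)`. Hence the `i`-th Painlevé equation at `z` is `c²` times the `i`-th
dressing equation at `cz`. Since `∑ f_i(z) = 2c ∑ w_i(cz)` and `Δc² = -1`, the normalizations
correspond to the first integral and to the value of `∑ a_i`.
-/

theorem sum_range_pairSum_odd_sub_even {M : Type*} [AddCommGroup M] (n : ℕ)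
    (v : Fin (2 * n + 1) → M) (i : Fin (2 * n + 1)) :
    (∑ j ∈ Finset.range n, (v (i + ((2 * j + 1 : ℕ) : Fin (2 * n + 1)))
        + v (i + ((2 * j + 1 : ℕ) : Fin (2 * n + 1)) + 1))) -
      ∑ j ∈ Finset.range n, (v (i + ((2 * j + 2 : ℕ) : Fin (2 * n + 1)))
        + v (i + ((2 * j + 2 : ℕ) : Fin (2 * n + 1)) + 1))
      = v (i + 1) - v i := by
  set h : ℕ → M := fun k => v (i + ((2 * k + 1 : ℕ) : Fin (2 * n + 1)))
  have hstep : ∀ j, (v (i + ((2 * j + 1 : ℕ) : Fin (2 * n + 1)))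
        + v (i + ((2 * j + 1 : ℕ) : Fin (2 * n + 1)) + 1)) -
      (v (i + ((2 * j + 2 : ℕ) : Fin (2 * n + 1)))
        + v (i + ((2 * j + 2 : ℕ) : Fin (2 * n + 1)) + 1)) = h j - h (j + 1) := by
    intro j
    simp only [h, add_assoc, ← Nat.cast_succ, mul_add]
    abel
  rw [← Finset.sum_sub_distrib, Finset.sum_congr rfl fun j _ => hstep j,
    Finset.sum_range_sub']
  simp [h]

theorem deriv_const_mul_comp_const_mul {𝕜 : Type*} [NontriviallyNormedField 𝕜]
    (c : 𝕜) (g : 𝕜 → 𝕜) (z : 𝕜) :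
    deriv (fun t => c * g (c * t)) z = c ^ 2 * deriv g (c * z) := by
  rw [deriv_const_mul_field, deriv_comp_mul_left, smul_eq_mul, sq, mul_assoc]

theorem forall_mem_iff_forall_const_mul_mem {G₀ : Type*} [GroupWithZero G₀] {c : G₀}
    (hc : c ≠ 0) (D : Set G₀) (P : G₀ → Prop) :
    (∀ u ∈ D, P u) ↔ ∀ z, c * z ∈ D → P (c * z) :=
  (Equiv.mulLeft₀ c hc).forall_congr_right.symm

section ChangeOfVariables

variable {n : ℕ} {c : ℂ} {w f : Fin (2 * n + 1) → ℂ → ℂ}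

theorem painleve_eq_iff_dressing_eq (hc : c ≠ 0)
    (hf : ∀ i z, f i z = c * (w i (c * z) + w (i + 1) (c * z))) (z : ℂ) (i : Fin (2 * n + 1))
    (b : ℂ) :
    deriv (f i) z + f i z *
        ((∑ j ∈ Finset.range n, f (i + ((2 * j + 1 : ℕ) : Fin (2 * n + 1))) z) -
         (∑ j ∈ Finset.range n, f (i + ((2 * j + 2 : ℕ) : Fin (2 * n + 1))) z)) = c ^ 2 * b ↔
      deriv (fun t => w i t + w (i + 1) t) (c * z) + (w (i + 1) (c * z)) ^ 2
        - (w i (c * z)) ^ 2 = b := by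
  have hderiv : deriv (f i) z = c ^ 2 * deriv (fun t => w i t + w (i + 1) t) (c * z) := by
    rw [funext (hf i)]
    exact deriv_const_mul_comp_const_mul c (fun t => w i t + w (i + 1) t) z
  have htelescope :
      (∑ j ∈ Finset.range n, f (i + ((2 * j + 1 : ℕ) : Fin (2 * n + 1))) z) -
        (∑ j ∈ Finset.range n, f (i + ((2 * j + 2 : ℕ) : Fin (2 * n + 1))) z)
        = c * (w (i + 1) (c * z) - w i (c * z)) := by
    simp only [hf, ← Finset.mul_sum, ← mul_sub]
    rw [sum_range_pairSum_odd_sub_even n (fun k => w k (c * z))]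
  rw [hderiv, htelescope, hf]
  refine Iff.trans ?_ (mul_right_inj' (pow_ne_zero 2 hc))
  ring_nf

theorem sum_eq_two_mul_sum_rescaled (hf : ∀ i z, f i z = c * (w i (c * z) + w (i + 1) (c * z))) (z : ℂ) :
    ∑ i, f i z = 2 * c * ∑ i, w i (c * z) := by
  have hshift : ∑ i, w (i + 1) (c * z) = ∑ i, w i (c * z) :=
    Fintype.sum_equiv (Equiv.addRight 1) _ _ fun _ => rfl
  simp only [hf, ← Finset.mul_sum, Finset.sum_add_distrib, hshift]
  ring

end ChangeOfVariables

theorem dressing_chain_iff_painleve_general (n : ℕ) (Δ c : ℂ) (hΔ : Δ ≠ 0)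
    (hc : c ^ 2 = -1 / Δ)
    (D : Set ℂ)
    (w : Fin (2 * n + 1) → ℂ → ℂ)
    (a : Fin (2 * n + 1) → ℂ)
    (f : Fin (2 * n + 1) → ℂ → ℂ) (α : Fin (2 * n + 1) → ℂ)
    (hf : ∀ i z, f i z = c * (w i (c * z) + w (i + 1) (c * z)))
    (hα : ∀ i, α i = c ^ 2 * a i) :
    ((∀ z ∈ D, ∀ i : Fin (2 * n + 1),
        deriv (fun t => w i t + w (i + 1) t) z + (w (i + 1) z) ^ 2 - (w i z) ^ 2 = a i) ∧
      (∑ i, a i = -Δ) ∧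
      (∀ z ∈ D, ∑ i, w i z = -Δ * z / 2)) ↔
    ((∀ z : ℂ, c * z ∈ D → ∀ i : Fin (2 * n + 1),
        deriv (f i) z + f i z *
          ((∑ j ∈ Finset.range n, f (i + ((2 * j + 1 : ℕ) : Fin (2 * n + 1))) z) -
           (∑ j ∈ Finset.range n, f (i + ((2 * j + 2 : ℕ) : Fin (2 * n + 1))) z)) = α i) ∧
      (∀ z : ℂ, c * z ∈ D → ∑ i, f i z = z) ∧
      (∑ i, α i = 1)) := by
  have hΔc : Δ * c ^ 2 = -1 := by rw [hc]; field_simp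
  have hc0 : c ≠ 0 := by rintro rfl; simp at hΔc
  simp only [forall_mem_iff_forall_const_mul_mem hc0 D]
  refine and_congr (forall₂_congr fun z _ => forall_congr' fun i => ?_)
    (and_comm.trans (and_congr (forall₂_congr fun z _ => ?_) ?_))
  · rw [hα, painleve_eq_iff_dressing_eq hc0 hf]
  · rw [sum_eq_two_mul_sum_rescaled hf z]
    constructor <;> intro h
    · linear_combination (2 * c) * h - z * hΔc
    · linear_combination (-Δ * c / 2) * h + (∑ i, w i (c * z)) * hΔc
  · rw [Finset.sum_congr rfl fun i _ => hα i, ← Finset.mul_sum]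
    constructor <;> intro h
    · linear_combination c ^ 2 * h - hΔc
    · linear_combination (-Δ) * h + (∑ i, a i) * hΔc

/-- Equivalence between the (2n+1)-cyclic dressing chain with shift Δ
(together with its first integral) and the A_{2n}-Painlevé system (together with its
normalizations), under the change of variables
`f i z = c (w i (cz) + w (i+1) (cz))`, `α i = c² a i`, `c² = −1/Δ`. -/
theorem dressing_chain_iff_painleve (n : ℕ) (hn : 1 ≤ n) (Δ c : ℂ) (hΔ : Δ ≠ 0)
    (hc : c ^ 2 = -1 / Δ)
    (D : Set ℂ) (hD : IsOpen D)
    (w : Fin (2 * n + 1) → ℂ → ℂ) (hw : ∀ i, DifferentiableOn ℂ (w i) D)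
    (a : Fin (2 * n + 1) → ℂ)
    (f : Fin (2 * n + 1) → ℂ → ℂ) (α : Fin (2 * n + 1) → ℂ)
    (hf : ∀ i z, f i z = c * (w i (c * z) + w (i + 1) (c * z)))
    (hα : ∀ i, α i = c ^ 2 * a i) :
    ((∀ z ∈ D, ∀ i : Fin (2 * n + 1),
        deriv (fun t => w i t + w (i + 1) t) z + (w (i + 1) z) ^ 2 - (w i z) ^ 2 = a i) ∧
      (∑ i, a i = -Δ) ∧
      (∀ z ∈ D, ∑ i, w i z = -Δ * z / 2)) ↔
    ((∀ z : ℂ, c * z ∈ D → ∀ i : Fin (2 * n + 1),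
        deriv (f i) z + f i z *
          ((∑ j ∈ Finset.range n, f (i + ((2 * j + 1 : ℕ) : Fin (2 * n + 1))) z) -
           (∑ j ∈ Finset.range n, f (i + ((2 * j + 2 : ℕ) : Fin (2 * n + 1))) z)) = α i) ∧
      (∀ z : ℂ, c * z ∈ D → ∑ i, f i z = z) ∧
      (∑ i, α i = 1)) :=
  dressing_chain_iff_painleve_general n Δ c hΔ hc D w a f α hf hα
end

section
/- Let n ≥ 0, Δ ∈ ℂ, and let D ⊆ ℂ be a nonempty open connected set. Suppose that for every i ∈ ℤ we are given differentiable functions w_i, U_i : D → ℂ and a constant λ_i ∈ ℂ such that on D: (i) w_i' + w_i² = U_i − λ_i, (ii) −w_i' + w_i² = U_{i+1} − λ_i, (iii) U_{i+2n+1} = U_i + Δ, and (iv) U_i − U_{i+1} is not identically zero on D. Then w_{i+2n+1} = w_i and λ_{i+2n+1} = λ_i + Δ for all i ∈ ℤ, and setting a_i := λ_i − λ_{i+1} for i = 0,…,2n, the tuple (w_0,…,w_{2n} | a_0,…,a_{2n}) satisfies (w_i + w_{i+1})' + w_{i+1}² − w_i² = a_i for i = 0,…,2n (indices mod 2n+1)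 and a_0 + ⋯ + a_{2n} = −Δ. -/
/-- A differentiable function with zero derivative on an open connected set is constant. -/
lemma const_of_deriv_zero_aux {D : Set ℂ} (hO : IsOpen D) (hconn : IsConnected D)
    {f : ℂ → ℂ} (hf : DifferentiableOn ℂ f D) (hd : ∀ z ∈ D, deriv f z = 0)
    {x y : ℂ} (hx : x ∈ D) (hy : y ∈ D) : f x = f y := by
  by_contra hne
  have hloc : ∀ z ∈ D, ∃ ε > 0, Metric.ball z ε ⊆ D ∧ ∀ u ∈ Metric.ball z ε, f u = f z := by
    intro z hz
    obtain ⟨ε, hε, hball⟩ := Metric.isOpen_iff.1 hO z hz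
    refine ⟨ε, hε, hball, fun u hu => ?_⟩
    refine (convex_ball z ε).is_const_of_fderivWithin_eq_zero (hf.mono hball)
      (fun t ht => ?_) hu (Metric.mem_ball_self hε)
    rw [fderivWithin_of_isOpen Metric.isOpen_ball ht]
    ext y'
    rw [fderiv_eq_smul_deriv, hd t (hball ht), smul_zero]
    rfl
  set u : Set ℂ := {z | z ∈ D ∧ f z = f x} with hu_def
  set v : Set ℂ := {z | z ∈ D ∧ f z ≠ f x} with hv_def
  have hu : IsOpen u := by
    rw [Metric.isOpen_iff]
    intro z hz
    obtain ⟨ε, hε, hball, hconst⟩ := hloc z hz.1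
    exact ⟨ε, hε, fun t ht => ⟨hball ht, (hconst t ht).trans hz.2⟩⟩
  have hv : IsOpen v := by
    rw [Metric.isOpen_iff]
    intro z hz
    obtain ⟨ε, hε, hball, hconst⟩ := hloc z hz.1
    exact ⟨ε, hε, fun t ht => ⟨hball ht, by rw [hconst t ht]; exact hz.2⟩⟩
  obtain ⟨z, _, hz1, hz2⟩ := hconn.isPreconnected u v hu hv
    (fun z hz => by by_cases h : f z = f x
                    · exact Or.inl ⟨hz, h⟩
                    · exact Or.inr ⟨hz, h⟩)
    ⟨x, hx, ⟨hx, rfl⟩⟩ ⟨y, hy, ⟨hy, fun h => hne h.symm⟩⟩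
  exact hz2.2 hz1.2

/-- A bi-infinite factorization chain of Schrödinger operators with the
periodicity condition `U_{i+2n+1} = U_i + Δ` (and nondegeneracy `U_i ≠ U_{i+1}`) yields a
(2n+1)-cyclic dressing chain with shift Δ: the superpotentials are periodic, the
factorization energies shift by Δ, and with `a i := λ i − λ (i+1)` the dressing chain
equations and `a_0 + ⋯ + a_{2n} = −Δ` hold. -/
theorem factorization_chain_gives_dressing_chain (n : ℕ) (Δ : ℂ)
    (D : Set ℂ) (hne : D.Nonempty) (hO : IsOpen D) (hconn : IsConnected D)
    (w U : ℤ → ℂ → ℂ) (lam : ℤ → ℂ)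
    (hwdiff : ∀ i, DifferentiableOn ℂ (w i) D)
    (hUdiff : ∀ i, DifferentiableOn ℂ (U i) D)
    (h1 : ∀ i : ℤ, ∀ z ∈ D, deriv (w i) z + (w i z) ^ 2 = U i z - lam i)
    (h2 : ∀ i : ℤ, ∀ z ∈ D, -deriv (w i) z + (w i z) ^ 2 = U (i + 1) z - lam i)
    (h3 : ∀ i : ℤ, ∀ z ∈ D, U (i + (2 * n + 1)) z = U i z + Δ)
    (h4 : ∀ i : ℤ, ∃ z ∈ D, U i z ≠ U (i + 1) z) :
    (∀ i : ℤ, ∀ z ∈ D, w (i + (2 * n + 1)) z = w i z) ∧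
    (∀ i : ℤ, lam (i + (2 * n + 1)) = lam i + Δ) ∧
    (∀ z ∈ D, ∀ i : Fin (2 * n + 1),
      deriv (fun t => w (i : ℕ) t + w (((i + 1 : Fin (2 * n + 1)) : ℕ) : ℤ) t) z
        + (w (((i + 1 : Fin (2 * n + 1)) : ℕ) : ℤ) z) ^ 2 - (w ((i : ℕ) : ℤ) z) ^ 2
        = lam ((i : ℕ) : ℤ) - lam (((i : ℕ) : ℤ) + 1)) ∧
    (∑ i : Fin (2 * n + 1), (lam ((i : ℕ) : ℤ) - lam (((i : ℕ) : ℤ) + 1)) = -Δ) := by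
  set m : ℤ := 2 * (n : ℤ) + 1 with hm
  have hwAt : ∀ (i : ℤ) (z : ℂ), z ∈ D → DifferentiableAt ℂ (w i) z :=
    fun i z hz => (hwdiff i z hz).differentiableAt (hO.mem_nhds hz)
  -- key periodicity
  have key : ∀ i : ℤ, (∀ z ∈ D, w (i + m) z = w i z) ∧ lam (i + m) = lam i + Δ := by
    intro i
    -- the four pointwise equations
    have hA : ∀ z ∈ D, deriv (w (i + m)) z + (w (i + m) z) ^ 2 = U i z + Δ - lam (i + m) := by
      intro z hz
      rw [← h3 i z hz]
      exact h1 (i + m) z hz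
    have hB : ∀ z ∈ D, -deriv (w (i + m)) z + (w (i + m) z) ^ 2
        = U (i + 1) z + Δ - lam (i + m) := by
      intro z hz
      have e : i + m + 1 = (i + 1) + m := by ring
      have := h2 (i + m) z hz
      rw [e, h3 (i + 1) z hz] at this
      exact this
    have hd0 : ∀ z ∈ D, deriv (fun t => w (i + m) t - w i t) z
        = deriv (w (i + m)) z - deriv (w i) z :=
      fun z hz => deriv_sub (hwAt _ z hz) (hwAt _ z hz)
    have hdzero : ∀ z ∈ D, deriv (fun t => w (i + m) t - w i t) z = 0 := by
      intro z hz
      rw [hd0 z hz]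
      linear_combination (hA z hz - h1 i z hz - (hB z hz - h2 i z hz)) / 2
    have hprod : ∀ z ∈ D, (w (i + m) z) ^ 2 - (w i z) ^ 2 = lam i + Δ - lam (i + m) := by
      intro z hz
      linear_combination (hA z hz - h1 i z hz + (hB z hz - h2 i z hz)) / 2
    have hfdiff : DifferentiableOn ℂ (fun t => w (i + m) t - w i t) D :=
      (hwdiff _).sub (hwdiff _)
    obtain ⟨x0, hx0⟩ := hne
    set k : ℂ := w (i + m) x0 - w i x0 with hk_def
    have hfconst : ∀ z ∈ D, w (i + m) z - w i z = k :=
      fun z hz => const_of_deriv_zero_aux hO hconn hfdiff hdzero hz hx0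
    by_cases hk : k = 0
    · have hper : ∀ z ∈ D, w (i + m) z = w i z := by
        intro z hz
        have := hfconst z hz
        rw [hk] at this
        exact sub_eq_zero.mp this
      constructor
      · exact hper
      · have := hprod x0 hx0
        rw [hper x0 hx0] at this
        have h0 : (0 : ℂ) = lam i + Δ - lam (i + m) := by linear_combination this
        linear_combination h0
    · -- contradiction with h4 i
      exfalso
      have hwval : ∀ z ∈ D, w i z = (lam i + Δ - lam (i + m) - k ^ 2) / (2 * k) := by
        intro z hz
        have h2k : (2 * k) * w i z = lam i + Δ - lam (i + m) - k ^ 2 := by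
          linear_combination hprod z hz - (w (i + m) z + w i z + k) * hfconst z hz
        field_simp
        linear_combination h2k
      have hderiv0 : ∀ z ∈ D, deriv (w i) z = 0 := by
        intro z hz
        have heq : w i =ᶠ[nhds z]
            fun _ => (lam i + Δ - lam (i + m) - k ^ 2) / (2 * k) :=
          Filter.eventuallyEq_of_mem (hO.mem_nhds hz) (fun t ht => hwval t ht)
        rw [heq.deriv_eq]
        exact deriv_const z _
      obtain ⟨z, hz, hUne⟩ := h4 i
      apply hUne
      linear_combination h2 i z hz - h1 i z hz + 2 * hderiv0 z hz
  have hper : ∀ i : ℤ, ∀ z ∈ D, w (i + m) z = w i z := fun i => (key i).1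
  have hlam : ∀ i : ℤ, lam (i + m) = lam i + Δ := fun i => (key i).2
  -- chain relation for consecutive integer indices
  have hkey : ∀ j : ℤ, ∀ z ∈ D,
      deriv (w j) z + deriv (w (j + 1)) z + (w (j + 1) z) ^ 2 - (w j z) ^ 2
        = lam j - lam (j + 1) := by
    intro j z hz
    linear_combination h1 (j + 1) z hz - h2 j z hz
  refine ⟨hper, hlam, ?_, ?_⟩
  · intro z hz i
    by_cases hi : (i : ℕ) = 2 * n
    · -- last index: i+1 wraps to 0
      have hlast : i = Fin.last (2 * n) := Fin.ext (by simpa using hi)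
      have hsucc : ((i + 1 : Fin (2 * n + 1)) : ℕ) = 0 := by
        rw [hlast]
        simp
      rw [hsucc, hi]
      have e0 : (0 : ℤ) + m = ((2 * n : ℕ) : ℤ) + 1 := by push_cast; ring
      have hw0 : ∀ t ∈ D, w (((2 * n : ℕ) : ℤ) + 1) t = w ((0 : ℕ) : ℤ) t := by
        intro t ht
        have := hper 0 t ht
        rw [e0] at this
        simpa using this
      have hdw0 : deriv (w (((2 * n : ℕ) : ℤ) + 1)) z = deriv (w ((0 : ℕ) : ℤ)) z := by
        have heq : w (((2 * n : ℕ) : ℤ) + 1) =ᶠ[nhds z] w ((0 : ℕ) : ℤ) :=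
          Filter.eventuallyEq_of_mem (hO.mem_nhds hz) (fun t ht => hw0 t ht)
        exact heq.deriv_eq
      have hsum : deriv (fun t => w ((2 * n : ℕ) : ℤ) t + w ((0 : ℕ) : ℤ) t) z
          = deriv (w ((2 * n : ℕ) : ℤ)) z + deriv (w ((0 : ℕ) : ℤ)) z :=
        deriv_add (hwAt _ z hz) (hwAt _ z hz)
      have := hkey ((2 * n : ℕ) : ℤ) z hz
      rw [hsum]
      rw [hdw0, hw0 z hz] at this
      push_cast at this ⊢
      linear_combination this
    · -- non-last index: i+1 is just successor
      have hlt : i < Fin.last (2 * n) := by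
        rw [Fin.lt_def, Fin.val_last]
        omega
      have hsucc : ((i + 1 : Fin (2 * n + 1)) : ℕ) = (i : ℕ) + 1 :=
        Fin.val_add_one_of_lt hlt
      rw [hsucc]
      have hsum : deriv (fun t => w ((i : ℕ) : ℤ) t + w (((i : ℕ) + 1 : ℕ) : ℤ) t) z
          = deriv (w ((i : ℕ) : ℤ)) z + deriv (w (((i : ℕ) + 1 : ℕ) : ℤ)) z :=
        deriv_add (hwAt _ z hz) (hwAt _ z hz)
      have := hkey ((i : ℕ) : ℤ) z hz
      rw [hsum]
      push_cast at this ⊢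
      linear_combination this
  · -- telescoping sum
    rw [Fin.sum_univ_eq_sum_range (fun j : ℕ => lam ((j : ℤ)) - lam ((j : ℤ) + 1)) (2 * n + 1)]
    have hterm : ∀ j ∈ Finset.range (2 * n + 1),
        lam ((j : ℤ)) - lam ((j : ℤ) + 1)
          = (fun j : ℕ => lam ((j : ℤ))) j - (fun j : ℕ => lam ((j : ℤ))) (j + 1) := by
      intro j _
      simp only []
      push_cast
      ring_nf
    rw [Finset.sum_congr rfl hterm, Finset.sum_range_sub' (fun j : ℕ => lam ((j : ℤ)))]
    have h0 : lam (((2 * n + 1 : ℕ)) : ℤ) = lam 0 + Δ := by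
      have := hlam 0
      have e0 : (0 : ℤ) + m = ((2 * n + 1 : ℕ) : ℤ) := by push_cast; ring
      rw [e0] at this
      simpa using this
    rw [h0]
    push_cast
    ring
end

section
/- Let (w_0,…,w_{2n} | a_0,…,a_{2n}) be a rational solution of a (2n+1)-cyclic dressing chain with shift Δ ≠ 0, with each w_i + w_{i+1} not identically zero, and let ζ ∈ ℂ be a pole of some w_i. Then for every j = 0,…,2n there exist an integer m_j with |m_j| ≤ n and a function g_j analytic in a neighbourhood of ζ such that w_j(z) = m_j/(z − ζ) + g_j(z) on a punctured neighbourhood of ζ, and moreover m_j · g_j(ζ) = 0. (Equivalently: Res_ζ w_j ∈ ℤ with |Res_ζ w_j| ≤ n, and Res_ζ w_j² = 0.) -/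
/-!
Near `ζ` write `w_j = F_j / (z - ζ)^K` with `F_j` analytic and `K` a common bound for the pole
orders. Multiplying the `i`-th chain equation by `(z - ζ)^(2K)` and evaluating at `ζ` gives
`F_{i+1}(ζ)² = F_i(ζ)²` when `K ≥ 2`, while the sum of the chain equations says that `∑ w_j'` is
constant, whence `∑ F_j(ζ) = 0`. On a cycle of odd length this forces `F_j(ζ) = 0` for all `j`,
so `K` can be lowered down to `1`.

For `K = 1` the residues `c_j = F_j(ζ)` satisfy `c_{i+1}² - c_i² = c_i + c_{i+1}`, that is
`c_{i+1} ∈ {-c_i, c_i + 1}`. Going once around the odd cycle shows that the `c_j` are integers and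
that one of them vanishes, so `|c_j| ≤ n`. The next Taylor coefficient of the same equation says
that `c_j · g_j(ζ)` does not depend on `j`, hence vanishes.
-/

open Filter Topology Finset Fin.NatCast

theorem Fin.val_sub_add_val_sub {N : ℕ} {i j : Fin N} (h : i ≠ j) :
    (i - j).val + (j - i).val = N := by
  rcases lt_or_gt_of_ne h with h | h
  · rw [Fin.coe_sub_iff_lt.2 h, Fin.sub_val_of_le h.le]; omega
  · rw [Fin.coe_sub_iff_lt.2 h, Fin.sub_val_of_le h.le]; omega

section Cyclic

variable {N : ℕ} [NeZero N]

theorem Fin.add_natCast_val_sub (i j : Fin N) : i + ((j - i).val : Fin N) = j := by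
  rw [Fin.cast_val_eq_self, add_sub_cancel]

theorem Fin.sum_comp_add_one {M : Type*} [AddCommMonoid M] (f : Fin N → M) :
    ∑ i, f (i + 1) = ∑ i, f i :=
  Equiv.sum_comp (Equiv.addRight 1) f

theorem Fin.apply_eq_apply_of_forall_add_one {α : Type*} (f : Fin N → α)
    (h : ∀ i, f (i + 1) = f i) (i j : Fin N) : f i = f j := by
  have walk : ∀ t : ℕ, f (i + t) = f i := by
    intro t
    induction t with
    | zero => simp
    | succ t ih => rw [Nat.cast_succ, ← add_assoc, h, ih]
  rw [← walk (j - i).val, Fin.add_natCast_val_sub]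

theorem Fin.two_mul_apply_le_of_apply_eq_zero (f : Fin N → ℕ) (h₁ : ∀ i, f (i + 1) ≤ f i + 1)
    (h₂ : ∀ i, f i ≤ f (i + 1) + 1) {i₀ : Fin N} (h₀ : f i₀ = 0) (j : Fin N) : 2 * f j ≤ N := by
  have fwd : ∀ (i : Fin N) (t : ℕ), f (i + t) ≤ f i + t := by
    intro i t
    induction t with
    | zero => simp
    | succ t ih => rw [Nat.cast_succ, ← add_assoc]; linarith [h₁ (i + t)]
  have bwd : ∀ (i : Fin N) (t : ℕ), f i ≤ f (i + t) + t := by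
    intro i t
    induction t with
    | zero => simp
    | succ t ih => rw [Nat.cast_succ, ← add_assoc i]; linarith [h₂ (i + t)]
  rcases eq_or_ne j i₀ with rfl | hne
  · simp [h₀]
  have h_to : f j ≤ (j - i₀).val := by
    simpa [h₀, Fin.add_natCast_val_sub] using fwd i₀ (j - i₀).val
  have h_from : f j ≤ (i₀ - j).val := by
    simpa [h₀, Fin.add_natCast_val_sub] using bwd j (i₀ - j).val
  have := Fin.val_sub_add_val_sub hne
  omega

end Cyclic

theorem Fin.exists_eq_zero_of_forall_add_one_eq_neg {n : ℕ} (f : Fin (2 * n + 1) → ℤ)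
    (h : ∀ i, f (i + 1) = -f i) : ∃ i, f i = 0 := by
  have hprod : ∏ i, f i = -∏ i, f i := calc
    ∏ i, f i = ∏ i, f (i + 1) := (Equiv.prod_comp (Equiv.addRight 1) f).symm
    _ = ∏ i, -f i := by simp only [h]
    _ = -∏ i, f i := by simp [Finset.prod_neg, pow_succ, pow_mul]
  obtain ⟨i, -, hi⟩ := Finset.prod_eq_zero_iff.1 (show ∏ i, f i = 0 by linarith)
  exact ⟨i, hi⟩

theorem eq_zero_of_sq_eq_of_sum_eq_zero {ι K : Type*} [Fintype ι] [Field K] [CharZero K]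
    (hodd : Odd (Fintype.card ι)) (α : ι → K) (hsq : ∀ i j, α i ^ 2 = α j ^ 2)
    (hsum : ∑ j, α j = 0) (i : ι) : α i = 0 := by
  classical
  by_contra hi
  have hsplit : ∀ j, α j = α i - 2 * α i * (if α j ≠ α i then 1 else 0) := by
    intro j
    split_ifs with h
    · rw [(sq_eq_sq_iff_eq_or_eq_neg.1 (hsq j i)).resolve_left h]; ring
    · simp [not_not.1 h]
  have hcard : α i * (Fintype.card ι - 2 * #{j | α j ≠ α i} : K) = 0 := by
    rw [← hsum, Finset.sum_congr rfl fun j _ => hsplit j, Finset.sum_sub_distrib,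
      ← Finset.mul_sum, Finset.sum_boole]
    simp only [sum_const, card_univ, nsmul_eq_mul]
    ring
  have : Fintype.card ι = 2 * #{j | α j ≠ α i} := by
    exact_mod_cast sub_eq_zero.1 ((mul_eq_zero.1 hcard).resolve_left hi)
  exact Nat.not_even_iff_odd.2 hodd ⟨_, this.trans (two_mul _)⟩

section NegOrAddOne

variable {n : ℕ}

theorem Int.exists_eq_zero_of_neg_or_add_one (M : Fin (2 * n + 1) → ℤ)
    (hM : ∀ i, M (i + 1) = -M i ∨ M (i + 1) = M i + 1) : ∃ i, M i = 0 := by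
  by_contra! hne
  -- away from `0`, both kinds of step flip the sign of `m ↦ sign m * (-1) ^ m`
  have hstep : ∀ i, (M (i + 1)).sign * ((M (i + 1)).negOnePow : ℤ) =
      -((M i).sign * ((M i).negOnePow : ℤ)) := by
    intro i
    rcases hM i with h | h
    · simp [h, Int.negOnePow_neg]
    · have hsign : (M i + 1).sign = (M i).sign := by
        have h₁ := hne i
        have h₂ := hne (i + 1)
        rw [h] at h₂
        rcases lt_or_gt_of_ne h₁ with h₁ | h₁
        · rw [Int.sign_eq_neg_one_of_neg h₁, Int.sign_eq_neg_one_of_neg (by omega)]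
        · rw [Int.sign_eq_one_of_pos h₁, Int.sign_eq_one_of_pos (by omega)]
      simp [h, hsign, Int.negOnePow_succ]
  obtain ⟨i, hi⟩ := Fin.exists_eq_zero_of_forall_add_one_eq_neg
    (fun i => (M i).sign * ((M i).negOnePow : ℤ)) hstep
  simp [hne i] at hi

theorem Int.natAbs_le_of_neg_or_add_one (M : Fin (2 * n + 1) → ℤ)
    (hM : ∀ i, M (i + 1) = -M i ∨ M (i + 1) = M i + 1) (j : Fin (2 * n + 1)) :
    (M j).natAbs ≤ n := by
  obtain ⟨i₀, h₀⟩ := Int.exists_eq_zero_of_neg_or_add_one M hM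
  have := Fin.two_mul_apply_le_of_apply_eq_zero (fun i => (M i).natAbs)
    (fun i => by rcases hM i with h | h <;> omega) (fun i => by rcases hM i with h | h <;> omega)
    (i₀ := i₀) (by simp [h₀]) j
  omega

theorem exists_eq_negOnePow_mul_add_of_neg_or_add_one {K : Type*} [CommRing K]
    (c : Fin (2 * n + 1) → K) (hc : ∀ i, c (i + 1) = -c i ∨ c (i + 1) = c i + 1)
    (j : Fin (2 * n + 1)) (t : ℕ) :
    ∃ k : ℤ, c (j + t) = ((t + k : ℤ).negOnePow : ℤ) * c j + k := by
  induction t with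
  | zero => exact ⟨0, by simp⟩
  | succ t ih =>
    obtain ⟨k, hk⟩ := ih
    rw [Nat.cast_succ, ← add_assoc]
    rcases hc (j + t) with h | h
    · have hsign : ((t + 1 : ℕ) + -k : ℤ).negOnePow = -(t + k : ℤ).negOnePow := by
        rw [← Int.negOnePow_succ, Int.negOnePow_eq_iff]
        exact ⟨-k, by push_cast; ring⟩
      exact ⟨-k, by rw [h, hk, hsign]; push_cast; ring⟩
    · have hsign : ((t + 1 : ℕ) + (k + 1) : ℤ).negOnePow = (t + k : ℤ).negOnePow := by
        rw [Int.negOnePow_eq_iff]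
        exact ⟨1, by push_cast; ring⟩
      exact ⟨k + 1, by rw [h, hk, hsign]; push_cast; ring⟩

variable {K : Type*} [Field K] [CharZero K]

theorem exists_intCast_eq_of_neg_or_add_one (c : Fin (2 * n + 1) → K)
    (hc : ∀ i, c (i + 1) = -c i ∨ c (i + 1) = c i + 1) (j : Fin (2 * n + 1)) :
    ∃ m : ℤ, c j = m := by
  -- after a full turn `c j = ± c j + k`, with the sign `-` exactly when `k` is even
  obtain ⟨k, hk⟩ := exists_eq_negOnePow_mul_add_of_neg_or_add_one c hc j (2 * n + 1)
  rw [Fin.natCast_self, add_zero] at hk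
  rcases Int.even_or_odd k with ⟨l, rfl⟩ | hodd
  · rw [Int.negOnePow_odd _ (by push_cast; exact ⟨n + l, by ring⟩)] at hk
    exact ⟨l, by push_cast at hk; linear_combination hk / 2⟩
  · rw [Int.negOnePow_even _ (by push_cast; exact Odd.add_odd ⟨n, rfl⟩ hodd)] at hk
    have hk0 : (k : K) = 0 := by push_cast at hk; linear_combination -hk
    norm_cast at hk0
    simp [hk0] at hodd

theorem exists_int_of_neg_or_add_one (c : Fin (2 * n + 1) → K)
    (hc : ∀ i, c (i + 1) = -c i ∨ c (i + 1) = c i + 1) :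
    ∃ M : Fin (2 * n + 1) → ℤ, (∀ j, c j = M j) ∧ (∃ i, M i = 0) ∧ ∀ j, (M j).natAbs ≤ n := by
  choose M hM using exists_intCast_eq_of_neg_or_add_one c hc
  have hMsteps : ∀ i, M (i + 1) = -M i ∨ M (i + 1) = M i + 1 := fun i => by
    have := hc i
    simp only [hM] at this
    exact_mod_cast this
  exact ⟨M, hM, Int.exists_eq_zero_of_neg_or_add_one M hMsteps,
    Int.natAbs_le_of_neg_or_add_one M hMsteps⟩

end NegOrAddOne

theorem AnalyticAt.dslope {𝕜 E : Type*} [NontriviallyNormedField 𝕜] [NormedAddCommGroup E]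
    [NormedSpace 𝕜 E] {F : 𝕜 → E} {ζ : 𝕜} (hF : AnalyticAt 𝕜 F ζ) :
    AnalyticAt 𝕜 (dslope F ζ) ζ :=
  let ⟨_, hp⟩ := hF
  hp.has_fpower_series_dslope_fslope.analyticAt

theorem Polynomial.eventually_eval_ne_zero_nhdsNE {R : Type*} [CommRing R] [IsDomain R]
    [TopologicalSpace R] [T1Space R] {q : Polynomial R} (hq : q ≠ 0) (ζ : R) :
    ∀ᶠ z in 𝓝[≠] ζ, q.eval z ≠ 0 :=
  nhdsNE_le_cofinite ζ (q.finite_setOfPred_isRoot hq).eventually_cofinite_notMem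

theorem Polynomial.meromorphicAt_eval_div_eval (p q : Polynomial ℂ) (ζ : ℂ) :
    MeromorphicAt (fun z => p.eval z / q.eval z) ζ :=
  (p.differentiable.analyticAt ζ).meromorphicAt.fun_div
    (q.differentiable.analyticAt ζ).meromorphicAt

def HasPoleOrderLE (f : ℂ → ℂ) (ζ : ℂ) (K : ℕ) : Prop :=
  ∃ F : ℂ → ℂ, AnalyticAt ℂ F ζ ∧ ∀ᶠ z in 𝓝[≠] ζ, f z = F z / (z - ζ) ^ K

section PoleOrder

variable {f F : ℂ → ℂ} {ζ : ℂ} {K : ℕ}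

theorem MeromorphicAt.exists_hasPoleOrderLE (hf : MeromorphicAt f ζ) :
    ∃ K, HasPoleOrderLE f ζ K := by
  obtain ⟨K, hK⟩ := hf
  refine ⟨K, _, hK, ?_⟩
  filter_upwards [self_mem_nhdsWithin] with z hz
  have : z - ζ ≠ 0 := sub_ne_zero.2 hz
  rw [smul_eq_mul]
  field_simp

theorem HasPoleOrderLE.mono (hf : HasPoleOrderLE f ζ K) {L : ℕ} (hKL : K ≤ L) :
    HasPoleOrderLE f ζ L := by
  obtain ⟨F, hF, hfF⟩ := hf
  refine ⟨fun z => (z - ζ) ^ (L - K) * F z, by fun_prop, ?_⟩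
  filter_upwards [hfF, self_mem_nhdsWithin] with z hz hne
  have : z - ζ ≠ 0 := sub_ne_zero.2 hne
  rw [hz, ← Nat.sub_add_cancel hKL, pow_add, Nat.add_sub_cancel]
  field_simp

theorem hasPoleOrderLE_of_apply_eq_zero (hF : AnalyticAt ℂ F ζ) (hF0 : F ζ = 0)
    (hf : ∀ᶠ z in 𝓝[≠] ζ, f z = F z / (z - ζ) ^ (K + 1)) : HasPoleOrderLE f ζ K := by
  refine ⟨dslope F ζ, hF.dslope, ?_⟩
  filter_upwards [hf, self_mem_nhdsWithin] with z hz hne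
  have : z - ζ ≠ 0 := sub_ne_zero.2 hne
  rw [hz, ← sub_zero (F z), ← hF0, ← sub_smul_dslope, smul_eq_mul, pow_succ]
  field_simp

theorem eventually_pow_mul_deriv_eq (hF : AnalyticAt ℂ F ζ)
    (hf : ∀ᶠ z in 𝓝[≠] ζ, f z = F z / (z - ζ) ^ K) :
    ∀ᶠ z in 𝓝[≠] ζ, (z - ζ) ^ (K + 1) * deriv f z = (z - ζ) * deriv F z - K * F z := by
  filter_upwards [eventually_eventually_nhdsWithin.2 hf, self_mem_nhdsWithin,
    nhdsWithin_le_nhds hF.eventually_analyticAt] with z hz hne hFz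
  rw [isOpen_compl_singleton.nhdsWithin_eq hne] at hz
  have hu : z - ζ ≠ 0 := sub_ne_zero.2 hne
  rw [Filter.EventuallyEq.deriv_eq (f₁ := f) hz, ((hFz.differentiableAt.hasDerivAt).fun_div
    (((hasDerivAt_id' z).sub_const ζ).fun_pow K) (pow_ne_zero _ hu)).deriv]
  rcases K with _ | K
  · simp
  · simp only [Nat.add_sub_cancel, Nat.cast_add, Nat.cast_one]
    field_simp
    ring

end PoleOrder

section DressingChain

variable {N : ℕ} [NeZero N]

def IsDressingChainNear (w : Fin N → ℂ → ℂ) (a : Fin N → ℂ) (ζ : ℂ) : Prop :=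
  ∀ᶠ z in 𝓝[≠] ζ, ∀ i,
    deriv (fun t => w i t + w (i + 1) t) z + w (i + 1) z ^ 2 - w i z ^ 2 = a i

namespace IsDressingChainNear

variable {w : Fin N → ℂ → ℂ} {a : Fin N → ℂ} {ζ : ℂ} {F : Fin N → ℂ → ℂ} {K : ℕ}

theorem eventually_pow_mul_deriv_pair (hF : ∀ j, AnalyticAt ℂ (F j) ζ)
    (hwF : ∀ j, ∀ᶠ z in 𝓝[≠] ζ, w j z = F j z / (z - ζ) ^ (K + 1)) :
    ∀ᶠ z in 𝓝[≠] ζ, ∀ i, (z - ζ) ^ (K + 2) * deriv (fun t => w i t + w (i + 1) t) z =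
      (z - ζ) * deriv (fun t => F i t + F (i + 1) t) z - (K + 1) * (F i z + F (i + 1) z) := by
  refine eventually_all.2 fun i => ?_
  have hpair : ∀ᶠ z in 𝓝[≠] ζ, w i z + w (i + 1) z = (F i z + F (i + 1) z) / (z - ζ) ^ (K + 1) := by
    filter_upwards [hwF i, hwF (i + 1)] with z hi hi1
    rw [hi, hi1, add_div]
  filter_upwards [eventually_pow_mul_deriv_eq ((hF i).add (hF (i + 1))) hpair] with z hz
  push_cast at hz
  exact hz

-- The `i`-th chain equation multiplied by `(z - ζ) ^ (2 * K + 2)`: unlike the equation itself,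
-- it is analytic at `ζ`.
theorem mul_pow_eventuallyEq_zero (hc : IsDressingChainNear w a ζ)
    (hF : ∀ j, AnalyticAt ℂ (F j) ζ)
    (hwF : ∀ j, ∀ᶠ z in 𝓝[≠] ζ, w j z = F j z / (z - ζ) ^ (K + 1)) (i : Fin N) :
    (fun z => (z - ζ) ^ K * ((z - ζ) * deriv (fun t => F i t + F (i + 1) t) z
        - (K + 1) * (F i z + F (i + 1) z)) + F (i + 1) z ^ 2 - F i z ^ 2
        - a i * (z - ζ) ^ (2 * K + 2)) =ᶠ[𝓝 ζ] 0 := by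
  have hFi := hF i
  have hFi1 := hF (i + 1)
  refine ((AnalyticAt.continuousAt (𝕜 := ℂ) (by fun_prop)).eventuallyEq_nhds_iff_eventuallyEq_nhdsNE
    continuousAt_const).1 ?_
  filter_upwards [hc, eventually_pow_mul_deriv_pair hF hwF, hwF i, hwF (i + 1),
    self_mem_nhdsWithin] with z hcz hpz hi hi1 hne
  have hu : z - ζ ≠ 0 := sub_ne_zero.2 hne
  have hFiz : F i z = (z - ζ) ^ (K + 1) * w i z := by rw [hi]; field_simp
  have hFi1z : F (i + 1) z = (z - ζ) ^ (K + 1) * w (i + 1) z := by rw [hi1]; field_simp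
  show _ = (0 : ℂ)
  linear_combination (-(z - ζ) ^ K) * hpz i + (z - ζ) ^ (2 * K + 2) * hcz i
    + (F (i + 1) z + (z - ζ) ^ (K + 1) * w (i + 1) z) * hFi1z
    - (F i z + (z - ζ) ^ (K + 1) * w i z) * hFiz

theorem sq_apply_add_one (hc : IsDressingChainNear w a ζ) (hF : ∀ j, AnalyticAt ℂ (F j) ζ)
    (hwF : ∀ j, ∀ᶠ z in 𝓝[≠] ζ, w j z = F j z / (z - ζ) ^ (K + 2)) (i : Fin N) :
    F (i + 1) ζ ^ 2 = F i ζ ^ 2 := by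
  have := (hc.mul_pow_eventuallyEq_zero (K := K + 1) hF hwF i).eq_of_nhds
  simp only [sub_self, ne_eq, Nat.add_eq_zero_iff, one_ne_zero, and_false, not_false_eq_true,
    zero_pow, zero_mul, zero_add, Pi.zero_apply] at this
  linear_combination this

theorem sum_apply_eq_zero (hc : IsDressingChainNear w a ζ) (hF : ∀ j, AnalyticAt ℂ (F j) ζ)
    (hwF : ∀ j, ∀ᶠ z in 𝓝[≠] ζ, w j z = F j z / (z - ζ) ^ (K + 1)) :
    ∑ j, F j ζ = 0 := by
  set G : ℂ → ℂ := fun z => ∑ i, ((z - ζ) * deriv (fun t => F i t + F (i + 1) t) z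
      - (K + 1) * (F i z + F (i + 1) z)) - (z - ζ) ^ (K + 2) * ∑ i, a i with hGdef
  have hG : AnalyticAt ℂ G ζ := by
    refine (Finset.analyticAt_fun_sum _ fun i _ => ?_).sub (by fun_prop)
    have := hF i
    have := hF (i + 1)
    fun_prop
  have h0 : G =ᶠ[𝓝[≠] ζ] 0 := by
    filter_upwards [hc, eventually_pow_mul_deriv_pair hF hwF] with z hcz hpz
    have hsum : ∑ i, deriv (fun t => w i t + w (i + 1) t) z = ∑ i, a i := by
      rw [← Finset.sum_congr rfl fun i _ => hcz i, Finset.sum_sub_distrib, Finset.sum_add_distrib,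
        Fin.sum_comp_add_one (fun i => w i z ^ 2)]
      ring
    show _ = (0 : ℂ)
    simp only [hGdef, ← Finset.sum_congr rfl fun i _ => hpz i, ← Finset.mul_sum, hsum]
    ring
  have hG0 := ((hG.continuousAt.eventuallyEq_nhds_iff_eventuallyEq_nhdsNE continuousAt_const).1
    h0).eq_of_nhds
  simp only [hGdef, sub_self, zero_mul, zero_sub, Finset.sum_neg_distrib, ← Finset.mul_sum,
    Finset.sum_add_distrib, Fin.sum_comp_add_one (fun i => F i ζ)] at hG0
  rw [zero_pow (by omega), zero_mul, sub_zero] at hG0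
  change _ = (0 : ℂ) at hG0
  have : ((K : ℂ) + 1) * 2 * ∑ j, F j ζ = 0 := by linear_combination -hG0
  simpa [Nat.cast_add_one_ne_zero] using this

theorem sq_apply_add_one_sub_sq (hc : IsDressingChainNear w a ζ)
    (hF : ∀ j, AnalyticAt ℂ (F j) ζ) (hwF : ∀ j, ∀ᶠ z in 𝓝[≠] ζ, w j z = F j z / (z - ζ))
    (i : Fin N) : F (i + 1) ζ ^ 2 - F i ζ ^ 2 = F i ζ + F (i + 1) ζ := by
  have := (hc.mul_pow_eventuallyEq_zero (K := 0) hF (by simpa using hwF) i).eq_of_nhds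
  simp only [sub_self, zero_mul, zero_sub, pow_zero, one_mul, Nat.cast_zero, zero_add, mul_zero,
    ne_eq, OfNat.ofNat_ne_zero, not_false_eq_true, zero_pow, sub_zero] at this
  change _ = (0 : ℂ) at this
  linear_combination this

theorem apply_add_one_mul_deriv (hc : IsDressingChainNear w a ζ)
    (hF : ∀ j, AnalyticAt ℂ (F j) ζ) (hwF : ∀ j, ∀ᶠ z in 𝓝[≠] ζ, w j z = F j z / (z - ζ))
    (i : Fin N) : F (i + 1) ζ * deriv (F (i + 1)) ζ = F i ζ * deriv (F i) ζ := by
  have hE := hc.mul_pow_eventuallyEq_zero (K := 0) hF (by simpa using hwF) i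
  simp only [pow_zero, one_mul, Nat.cast_zero, zero_add, mul_zero] at hE
  have hu : HasDerivAt (fun z => z - ζ) 1 ζ := (hasDerivAt_id' ζ).sub_const ζ
  have hFi := (hF i).differentiableAt.hasDerivAt
  have hFi1 := (hF (i + 1)).differentiableAt.hasDerivAt
  have hD := ((hF i).add (hF (i + 1))).deriv.differentiableAt.hasDerivAt
  have hder := ((((hu.mul hD).sub (hFi.add hFi1)).add (hFi1.fun_pow 2)).sub
    (hFi.fun_pow 2)).sub ((hu.fun_pow 2).const_mul (a i))
  have := hder.deriv.symm.trans hE.deriv_eq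
  rw [deriv_add (hF i).differentiableAt (hF (i + 1)).differentiableAt] at this
  simp only [one_mul, sub_self, zero_mul, add_zero, Nat.cast_ofNat, Nat.add_one_sub_one, pow_one,
    zero_add, mul_zero, mul_one, sub_zero, deriv_zero, Pi.zero_apply] at this
  linear_combination this / 2

end IsDressingChainNear

end DressingChain

namespace IsDressingChainNear

variable {n : ℕ} {w : Fin (2 * n + 1) → ℂ → ℂ} {a : Fin (2 * n + 1) → ℂ} {ζ : ℂ}

theorem hasPoleOrderLE_of_succ_succ (hc : IsDressingChainNear w a ζ) {K : ℕ}
    (hK : ∀ j, HasPoleOrderLE (w j) ζ (K + 2)) : ∀ j, HasPoleOrderLE (w j) ζ (K + 1) := by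
  choose F hF hwF using hK
  have hzero : ∀ j, F j ζ = 0 := eq_zero_of_sq_eq_of_sum_eq_zero (by simp) (fun j => F j ζ)
    (Fin.apply_eq_apply_of_forall_add_one (fun j => F j ζ ^ 2) (hc.sq_apply_add_one hF hwF))
    (hc.sum_apply_eq_zero hF hwF)
  exact fun j => hasPoleOrderLE_of_apply_eq_zero (hF j) (hzero j) (hwF j)

theorem hasPoleOrderLE_one (hc : IsDressingChainNear w a ζ) {K : ℕ}
    (hK : ∀ j, HasPoleOrderLE (w j) ζ K) : ∀ j, HasPoleOrderLE (w j) ζ 1 := by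
  induction K with
  | zero => exact fun j => (hK j).mono zero_le_one
  | succ K ih =>
    cases K with
    | zero => exact hK
    | succ K => exact ih (hc.hasPoleOrderLE_of_succ_succ hK)

theorem exists_residue (hc : IsDressingChainNear w a ζ) (hw : ∀ j, MeromorphicAt (w j) ζ)
    (j : Fin (2 * n + 1)) : ∃ (m : ℤ) (g : ℂ → ℂ), m.natAbs ≤ n ∧ AnalyticAt ℂ g ζ ∧
      (∀ᶠ z in 𝓝[≠] ζ, w j z = m / (z - ζ) + g z) ∧ (m : ℂ) * g ζ = 0 := by
  choose K hK using fun j => (hw j).exists_hasPoleOrderLE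
  choose F hF hwF using hc.hasPoleOrderLE_one fun j => (hK j).mono (le_sup (mem_univ j))
  simp only [pow_one] at hwF
  have hsteps : ∀ i, F (i + 1) ζ = -F i ζ ∨ F (i + 1) ζ = F i ζ + 1 := by
    intro i
    have : (F (i + 1) ζ + F i ζ) * (F (i + 1) ζ - F i ζ - 1) = 0 := by
      linear_combination hc.sq_apply_add_one_sub_sq hF hwF i
    rcases mul_eq_zero.1 this with h | h
    · exact .inl (by linear_combination h)
    · exact .inr (by linear_combination h)
  obtain ⟨M, hM, ⟨i₀, hi₀⟩, hMn⟩ := exists_int_of_neg_or_add_one (fun j => F j ζ) hsteps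
  have hprod : F j ζ * deriv (F j) ζ = 0 := by
    rw [Fin.apply_eq_apply_of_forall_add_one (fun j => F j ζ * deriv (F j) ζ)
      (hc.apply_add_one_mul_deriv hF hwF) j i₀, hM i₀, hi₀, Int.cast_zero, zero_mul]
  refine ⟨M j, dslope (F j) ζ, hMn j, (hF j).dslope, ?_, ?_⟩
  · filter_upwards [hwF j, self_mem_nhdsWithin] with z hz hne
    have hu : z - ζ ≠ 0 := sub_ne_zero.2 hne
    rw [hz, ← hM j, ← sub_add_cancel (F j z) (F j ζ), ← sub_smul_dslope, smul_eq_mul]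
    field_simp
    ring
  · rw [← hM j, dslope_same]
    exact hprod

end IsDressingChainNear

theorem rational_dressing_chain_residues_general (n : ℕ)
    (w : Fin (2 * n + 1) → ℂ → ℂ) (a : Fin (2 * n + 1) → ℂ)
    (p q : Fin (2 * n + 1) → Polynomial ℂ)
    (hq : ∀ i, q i ≠ 0)
    (hw : ∀ i z, (q i).eval z ≠ 0 → w i z = (p i).eval z / (q i).eval z)
    (hchain : ∀ z : ℂ, (∀ j, (q j).eval z ≠ 0) → ∀ i : Fin (2 * n + 1),
      deriv (fun t => w i t + w (i + 1) t) z + (w (i + 1) z) ^ 2 - (w i z) ^ 2 = a i)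
    (ζ : ℂ) :
    ∀ j : Fin (2 * n + 1), ∃ (m : ℤ) (g : ℂ → ℂ),
      m.natAbs ≤ n ∧ AnalyticAt ℂ g ζ ∧
      (∀ᶠ z in nhdsWithin ζ {ζ}ᶜ, w j z = (m : ℂ) / (z - ζ) + g z) ∧
      (m : ℂ) * g ζ = 0 := by
  have hq_ne : ∀ᶠ z in 𝓝[≠] ζ, ∀ j, (q j).eval z ≠ 0 :=
    eventually_all.2 fun j => Polynomial.eventually_eval_ne_zero_nhdsNE (hq j) ζ
  have hc : IsDressingChainNear w a ζ := hq_ne.mono hchain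
  refine hc.exists_residue fun j => (Polynomial.meromorphicAt_eval_div_eval (p j) (q j) ζ).congr ?_
  filter_upwards [hq_ne] with z hz
  exact (hw j z (hz j)).symm

/-- Let `(w_0,…,w_{2n} | a_0,…,a_{2n})` be a rational solution of a
(2n+1)-cyclic dressing chain with shift `Δ ≠ 0`, with each `w_i + w_{i+1}` not identically
zero, and let `ζ` be a pole of some `w_i`. Then near `ζ` every `w_j` has the form
`w_j(z) = m_j/(z−ζ) + g_j(z)` with `m_j ∈ ℤ`, `|m_j| ≤ n`, `g_j` analytic at `ζ`, and
`m_j · g_j(ζ) = 0` (i.e. `Res_ζ w_j ∈ ℤ`, `|Res_ζ w_j| ≤ n`, and `Res_ζ w_j² = 0`). -/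
theorem rational_dressing_chain_residues (n : ℕ) (Δ : ℂ) (hΔ : Δ ≠ 0)
    (w : Fin (2 * n + 1) → ℂ → ℂ) (a : Fin (2 * n + 1) → ℂ)
    (p q : Fin (2 * n + 1) → Polynomial ℂ)
    (hq : ∀ i, q i ≠ 0)
    (hcop : ∀ i, IsCoprime (p i) (q i))
    (hw : ∀ i z, (q i).eval z ≠ 0 → w i z = (p i).eval z / (q i).eval z)
    (hchain : ∀ z : ℂ, (∀ j, (q j).eval z ≠ 0) → ∀ i : Fin (2 * n + 1),
      deriv (fun t => w i t + w (i + 1) t) z + (w (i + 1) z) ^ 2 - (w i z) ^ 2 = a i)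
    (hsum : ∑ i, a i = -Δ)
    (hnz : ∀ i : Fin (2 * n + 1), ∃ z : ℂ,
      (∀ j, (q j).eval z ≠ 0) ∧ w i z + w (i + 1) z ≠ 0)
    (ζ : ℂ)
    (hpole : ∃ i₀ : Fin (2 * n + 1),
      Tendsto (fun z => ‖w i₀ z‖) (nhdsWithin ζ {ζ}ᶜ) atTop) :
    ∀ j : Fin (2 * n + 1), ∃ (m : ℤ) (g : ℂ → ℂ),
      m.natAbs ≤ n ∧ AnalyticAt ℂ g ζ ∧
      (∀ᶠ z in nhdsWithin ζ {ζ}ᶜ, w j z = (m : ℂ) / (z - ζ) + g z) ∧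
      (m : ℂ) * g ζ = 0 :=
  rational_dressing_chain_residues_general n w a p q hq hw hchain ζ
end

section
/- Let (w_0,…,w_{2n} | a_0,…,a_{2n}) be a rational solution of a (2n+1)-cyclic dressing chain with shift Δ ≠ 0, with each w_i + w_{i+1} not identically zero, and let ζ ∈ ℂ be a pole of some w_i. Write, for each j = 0,…,2n, w_j(z) = m_j/(z − ζ) + g_j(z) with m_j ∈ ℤ and g_j analytic at ζ. Then for every j and every integer ℓ with 0 ≤ ℓ ≤ |m_j| − 1, the even-order derivative g_j^{(2ℓ)}(ζ) vanishes. (Equivalently: Res_ζ w_j^{2r} = 0 for r = 1,…,|m_j|.) -/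
/-!
Near `ζ`, the `i`-th chain equation multiplied by `(z - ζ)²` takes the form `K + (z - ζ) H(z) = 0`
with `K = m_{i+1}² - m_i² - m_i - m_{i+1}` and `H` analytic at `ζ`. Hence `K = 0`, i.e. each step
of the residues is `m_{i+1} = -m_i` or `m_{i+1} = m_i + 1`, and `H ≡ 0`, whose `d`-th derivative
at `ζ` is a linear relation between the Taylor coefficients of `g_i` and `g_{i+1}` of order `d`,
perturbed by the `(d-1)`-st derivatives of `g_i²` and `g_{i+1}²`. Admissible steps around a cycle of
odd length must pass through a zero residue (a parity count). By induction on `ℓ`, the vanishing of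
the lower even coefficients kills the odd derivatives of the squares, and the relation at order
`2ℓ` becomes `(m_{i+1} + ℓ) g_{i+1}^{(2ℓ)}(ζ) = (m_i - ℓ) g_i^{(2ℓ)}(ζ)`. Starting from a zero
residue it carries the vanishing around the cycle: the only way to step into `|m| > ℓ` is from
`m_i = ℓ`, where the right-hand side vanishes.
-/

open Filter Topology Fin.NatCast

theorem Polynomial.eventually_eval_ne_zero_nhdsNE_s5 {𝕜 : Type*} [NormedField 𝕜]
    {p : Polynomial 𝕜} (hp : p ≠ 0) (x : 𝕜) : ∀ᶠ z in 𝓝[≠] x, p.eval z ≠ 0 := by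
  have : Finite {z | p.IsRoot z} := (p.finite_setOfPred_isRoot hp).to_subtype
  filter_upwards [nhdsNE_of_nhdsNE_sdiff_finite univ_mem this] with z hz using hz.2

section

variable {𝕜 : Type*} [NontriviallyNormedField 𝕜]

theorem iteratedDeriv_sub_mul_self {F : 𝕜 → 𝕜} {x : 𝕜} {d : ℕ} (hF : ContDiffAt 𝕜 d F x) :
    iteratedDeriv d (fun z => (z - x) * F z) x = d * iteratedDeriv (d - 1) F x := by
  have hlin : ∀ k, iteratedDeriv (k + 1) (fun z => z - x) x = if k = 0 then 1 else 0 := by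
    intro k
    rw [iteratedDeriv_succ']
    simp [iteratedDeriv_const]
  rw [iteratedDeriv_fun_mul (by fun_prop) hF, Finset.sum_range_succ']
  simp +contextual [hlin]

theorem iteratedDeriv_sq_odd_eq_zero {f : 𝕜 → 𝕜} {x : 𝕜} {ℓ : ℕ}
    (hf : ContDiffAt 𝕜 (2 * ℓ + 1) f x) (h : ∀ t ≤ ℓ, iteratedDeriv (2 * t) f x = 0) :
    iteratedDeriv (2 * ℓ + 1) (fun y => f y ^ 2) x = 0 := by
  simp_rw [sq]
  rw [iteratedDeriv_fun_mul hf hf]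
  refine Finset.sum_eq_zero fun k hk => ?_
  have hk : k ≤ 2 * ℓ + 1 := Finset.mem_range_succ_iff.mp hk
  obtain ⟨t, rfl | rfl⟩ := Nat.even_or_odd' k
  · rw [h t (by omega)]; ring
  · rw [show 2 * ℓ + 1 - (2 * t + 1) = 2 * (ℓ - t) by omega, h (ℓ - t) (by omega)]; ring

theorem AnalyticAt.eq_zero_and_eventuallyEq_zero_of_add_sub_mul {K ζ : 𝕜} {H : 𝕜 → 𝕜}
    (hH : AnalyticAt 𝕜 H ζ) (h : ∀ᶠ z in 𝓝[≠] ζ, K + (z - ζ) * H z = 0) :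
    K = 0 ∧ H =ᶠ[𝓝 ζ] 0 := by
  have hK : ∀ᶠ z in 𝓝 ζ, K + (z - ζ) * H z = 0 :=
    (analyticAt_const.add ((analyticAt_id.sub analyticAt_const).mul hH)
      ).frequently_zero_iff_eventually_zero.mp h.frequently
  have hK0 : K = 0 := by simpa using hK.self_of_nhds
  refine ⟨hK0, hH.frequently_zero_iff_eventually_zero.mp (Eventually.frequently ?_)⟩
  filter_upwards [h, self_mem_nhdsWithin] with z hz hne
  rw [hK0, zero_add] at hz
  exact (mul_eq_zero.mp hz).resolve_left (sub_ne_zero.mpr hne)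

variable [CompleteSpace 𝕜]

theorem dressing_link_laurent {ζ A M₁ M₂ : 𝕜} {w₁ w₂ g₁ g₂ : 𝕜 → 𝕜}
    (hg₁ : AnalyticAt 𝕜 g₁ ζ) (hg₂ : AnalyticAt 𝕜 g₂ ζ)
    (hw₁ : ∀ᶠ z in 𝓝[≠] ζ, w₁ z = M₁ / (z - ζ) + g₁ z)
    (hw₂ : ∀ᶠ z in 𝓝[≠] ζ, w₂ z = M₂ / (z - ζ) + g₂ z)
    (h : ∀ᶠ z in 𝓝[≠] ζ, deriv (fun t => w₁ t + w₂ t) z + w₂ z ^ 2 - w₁ z ^ 2 = A) :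
    M₂ ^ 2 - M₁ ^ 2 - M₁ - M₂ = 0 ∧
      (fun z => 2 * (M₂ * g₂ z - M₁ * g₁ z)
        + (z - ζ) * (deriv g₁ z + deriv g₂ z + g₂ z ^ 2 - g₁ z ^ 2 - A)) =ᶠ[𝓝 ζ] 0 := by
  refine AnalyticAt.eq_zero_and_eventuallyEq_zero_of_add_sub_mul (by fun_prop) ?_
  have hsum : (fun t => w₁ t + w₂ t) =ᶠ[𝓝[≠] ζ]
      fun t => M₁ / (t - ζ) + g₁ t + (M₂ / (t - ζ) + g₂ t) :=
    Filter.EventuallyEq.add hw₁ hw₂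
  have hg : ∀ᶠ z in 𝓝[≠] ζ, AnalyticAt 𝕜 g₁ z ∧ AnalyticAt 𝕜 g₂ z :=
    (hg₁.eventually_analyticAt.and hg₂.eventually_analyticAt).filter_mono nhdsWithin_le_nhds
  filter_upwards [h, hsum.nhdsNE_deriv, hw₁, hw₂, hg, self_mem_nhdsWithin]
    with z hz hd h₁ h₂ ⟨hz₁, hz₂⟩ hzζ
  rw [hd, h₁, h₂] at hz
  have hne : z - ζ ≠ 0 := sub_ne_zero.mpr hzζ
  have hpole : HasDerivAt (fun t => (t - ζ)⁻¹) (-1 / (z - ζ) ^ 2) z := by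
    simpa using ((hasDerivAt_id z).sub_const ζ).fun_inv hne
  have hderiv := ((hpole.const_mul M₁).fun_add hz₁.differentiableAt.hasDerivAt).fun_add
    ((hpole.const_mul M₂).fun_add hz₂.differentiableAt.hasDerivAt)
  simp only [div_eq_mul_inv] at hz
  rw [hderiv.deriv] at hz
  field_simp at hz
  linear_combination hz

theorem dressing_link_iteratedDeriv {ζ A M₁ M₂ : 𝕜} {g₁ g₂ : 𝕜 → 𝕜}
    (hg₁ : AnalyticAt 𝕜 g₁ ζ) (hg₂ : AnalyticAt 𝕜 g₂ ζ)
    (h : (fun z => 2 * (M₂ * g₂ z - M₁ * g₁ z)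
        + (z - ζ) * (deriv g₁ z + deriv g₂ z + g₂ z ^ 2 - g₁ z ^ 2 - A)) =ᶠ[𝓝 ζ] 0)
    {d : ℕ} (hd : d ≠ 1) :
    (2 * M₂ + d) * iteratedDeriv d g₂ ζ + (d - 2 * M₁) * iteratedDeriv d g₁ ζ
      + d * (iteratedDeriv (d - 1) (fun z => g₂ z ^ 2) ζ
        - iteratedDeriv (d - 1) (fun z => g₁ z ^ 2) ζ) = 0 := by
  have h0 := h.iteratedDeriv_eq d
  have hc : ∀ {f : 𝕜 → 𝕜}, AnalyticAt 𝕜 f ζ → ∀ {n : ℕ}, ContDiffAt 𝕜 n f ζ :=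
    fun hf => hf.contDiffAt
  rw [iteratedDeriv_fun_add (hc (by fun_prop)) (hc (by fun_prop)), iteratedDeriv_const_mul_field,
    iteratedDeriv_fun_sub (hc (by fun_prop)) (hc (by fun_prop)), iteratedDeriv_const_mul_field,
    iteratedDeriv_const_mul_field, iteratedDeriv_sub_mul_self (hc (by fun_prop))] at h0
  rcases d with _ | _ | e
  · simp only [iteratedDeriv_zero, Nat.cast_zero, zero_mul, add_zero, Pi.zero_def] at h0 ⊢
    linear_combination h0
  · contradiction
  rw [iteratedDeriv_fun_sub (hc (by fun_prop)) (hc (by fun_prop)),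
    iteratedDeriv_fun_sub (hc (by fun_prop)) (hc (by fun_prop)),
    iteratedDeriv_fun_add (hc (by fun_prop)) (hc (by fun_prop)),
    iteratedDeriv_fun_add (hc (by fun_prop)) (hc (by fun_prop))] at h0
  simp only [add_tsub_cancel_right, ← iteratedDeriv_succ', iteratedDeriv_const,
    Nat.add_eq_zero_iff, one_ne_zero, and_false, if_false, sub_zero, Pi.zero_def] at h0 ⊢
  linear_combination h0

end

theorem Int.eq_neg_or_eq_add_one_of_sq_sub_sq {a b : ℤ} (h : b ^ 2 - a ^ 2 - a - b = 0) :
    b = -a ∨ b = a + 1 := by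
  have : (b + a) * (b - a - 1) = 0 := by linear_combination h
  rcases mul_eq_zero.mp this with h | h
  · exact .inl (by omega)
  · exact .inr (by omega)

theorem Fin.forall_of_imp_add_one {N : ℕ} {P : Fin (N + 1) → Prop} {i₀ : Fin (N + 1)}
    (h₀ : P i₀) (hstep : ∀ i, P i → P (i + 1)) (j : Fin (N + 1)) : P j := by
  have hk : ∀ k : ℕ, P (i₀ + k) := by
    intro k
    induction k with
    | zero => simpa using h₀
    | succ k ih => simpa [add_assoc] using hstep _ ih
  simpa using hk (j - i₀).val

theorem Fin.not_forall_add_one_eq_add_one (n : ℕ) (F : Fin (2 * n + 1) → ZMod 2) :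
    ¬ ∀ i, F (i + 1) = F i + 1 := by
  intro h
  have hshift : ∑ i, F (i + 1) = ∑ i, F i := Equiv.sum_comp (Equiv.addRight 1) F
  simp only [h, Finset.sum_add_distrib, Finset.sum_const, Finset.card_univ, Fintype.card_fin,
    add_eq_left, nsmul_eq_mul, mul_one] at hshift
  simp [show (2 : ZMod 2) = 0 from rfl] at hshift

theorem exists_eq_zero_of_forall_eq_neg_or_eq_add_one {n : ℕ} {m : Fin (2 * n + 1) → ℤ}
    (hm : ∀ i, m (i + 1) = -m i ∨ m (i + 1) = m i + 1) : ∃ i, m i = 0 := by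
  by_contra! hne
  -- `t + [t > 0]` mod 2 flips under both `t ↦ -t` and `t ↦ t + 1` as long as no zero is met.
  refine Fin.not_forall_add_one_eq_add_one n (fun i => (m i : ZMod 2) + if 0 < m i then 1 else 0)
    fun i => ?_
  have h₀ := hne i
  have h₁ := hne (i + 1)
  rcases hm i with h | h <;> rw [h] at h₁ ⊢
  · rcases h₀.lt_or_gt with h₀ | h₀
    · simp [h₀, h₀.not_gt]
    · simp [h₀, h₀.not_gt, ZMod.neg_eq_self_mod_two, CharTwo.add_self_eq_zero, add_assoc]
  · have hpos : 0 < m i + 1 ↔ 0 < m i := by omega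
    push_cast
    split_ifs <;> simp_all [add_assoc, CharTwo.add_self_eq_zero]

theorem eq_zero_of_lt_natAbs_of_mul_eq_mul {R : Type*} [CommRing R] [IsDomain R] [CharZero R]
    {N ℓ : ℕ} {m : Fin (N + 1) → ℤ} {c : Fin (N + 1) → R}
    (hm : ∀ i, m (i + 1) = -m i ∨ m (i + 1) = m i + 1) (hzero : ∃ i, m i = 0)
    (hrel : ∀ i, ℓ ≤ (m i).natAbs → ℓ ≤ (m (i + 1)).natAbs →
      (m (i + 1) + ℓ : R) * c (i + 1) = (m i - ℓ : R) * c i)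
    {j : Fin (N + 1)} (hj : ℓ < (m j).natAbs) : c j = 0 := by
  obtain ⟨i₀, hi₀⟩ := hzero
  refine Fin.forall_of_imp_add_one (P := fun i => ℓ < (m i).natAbs → c i = 0) (i₀ := i₀)
    (fun h => by simp [hi₀] at h) (fun i hi hlt => ?_) j hj
  have hle : ℓ ≤ (m i).natAbs := by rcases hm i with h | h <;> omega
  have hrhs : (m i - ℓ : R) * c i = 0 := by
    rcases hle.lt_or_eq with hlt' | habs
    · rw [hi hlt', mul_zero]
    · have : m i = ℓ := by rcases hm i with h | h <;> omega
      simp [this]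
  have hcoef : (m (i + 1) + ℓ : R) ≠ 0 := by exact_mod_cast (by omega : m (i + 1) + ℓ ≠ 0)
  exact (mul_eq_zero.mp ((hrel i hle hlt.le).trans hrhs)).resolve_left hcoef

theorem rational_dressing_chain_even_coefficients_general (n : ℕ)
    (w : Fin (2 * n + 1) → ℂ → ℂ) (a : Fin (2 * n + 1) → ℂ)
    (q : Fin (2 * n + 1) → Polynomial ℂ)
    (hq : ∀ i, q i ≠ 0)
    (hchain : ∀ z : ℂ, (∀ j, (q j).eval z ≠ 0) → ∀ i : Fin (2 * n + 1),
      deriv (fun t => w i t + w (i + 1) t) z + (w (i + 1) z) ^ 2 - (w i z) ^ 2 = a i)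
    (ζ : ℂ)
    (m : Fin (2 * n + 1) → ℤ) (g : Fin (2 * n + 1) → ℂ → ℂ)
    (hg : ∀ j, AnalyticAt ℂ (g j) ζ)
    (hdec : ∀ j, ∀ᶠ z in nhdsWithin ζ {ζ}ᶜ, w j z = (m j : ℂ) / (z - ζ) + g j z) :
    ∀ (j : Fin (2 * n + 1)) (ℓ : ℕ), ℓ < (m j).natAbs →
      iteratedDeriv (2 * ℓ) (g j) ζ = 0 := by
  have hq_ne : ∀ᶠ z in 𝓝[≠] ζ, ∀ j, (q j).eval z ≠ 0 :=
    eventually_all.2 fun j => Polynomial.eventually_eval_ne_zero_nhdsNE_s5 (hq j) ζ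
  have hlink := fun i => dressing_link_laurent (hg i) (hg (i + 1)) (hdec i) (hdec (i + 1))
    (hq_ne.mono fun z hqz => hchain z hqz i)
  have hm : ∀ i, m (i + 1) = -m i ∨ m (i + 1) = m i + 1 := fun i =>
    Int.eq_neg_or_eq_add_one_of_sq_sub_sq (by exact_mod_cast (hlink i).1)
  intro j ℓ
  induction ℓ using Nat.strong_induction_on generalizing j with
  | _ ℓ ih =>
  have hsq : ∀ i, ℓ ≤ (m i).natAbs →
      ((2 * ℓ : ℕ) : ℂ) * iteratedDeriv (2 * ℓ - 1) (fun z => g i z ^ 2) ζ = 0 := by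
    intro i hi
    rcases ℓ with _ | ℓ
    · simp
    · rw [show 2 * (ℓ + 1) - 1 = 2 * ℓ + 1 by omega, iteratedDeriv_sq_odd_eq_zero
        (hg i).contDiffAt (fun t ht => ih t (by omega) i (by omega)), mul_zero]
  refine eq_zero_of_lt_natAbs_of_mul_eq_mul (c := fun i => iteratedDeriv (2 * ℓ) (g i) ζ) hm
    (exists_eq_zero_of_forall_eq_neg_or_eq_add_one hm) (fun i hi hi' => ?_)
  have hrel := dressing_link_iteratedDeriv (hg i) (hg (i + 1)) (hlink i).2 (d := 2 * ℓ) (by omega)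
  push_cast at hrel hsq
  linear_combination (hrel - hsq (i + 1) hi' + hsq i hi) / 2

/-- Let `(w_0,…,w_{2n} | a_0,…,a_{2n})` be a rational solution of a
(2n+1)-cyclic dressing chain with shift `Δ ≠ 0`, with each `w_i + w_{i+1}` not identically
zero, and let `ζ` be a pole of some `w_i`. Writing `w_j(z) = m_j/(z−ζ) + g_j(z)` with
`m_j ∈ ℤ` and `g_j` analytic at `ζ`, all the even-order derivatives `g_j^{(2ℓ)}(ζ)` vanish
for `0 ≤ ℓ ≤ |m_j| − 1` (equivalently `Res_ζ w_j^{2r} = 0` for `r = 1,…,|m_j|`). -/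
theorem rational_dressing_chain_even_coefficients (n : ℕ) (Δ : ℂ) (hΔ : Δ ≠ 0)
    (w : Fin (2 * n + 1) → ℂ → ℂ) (a : Fin (2 * n + 1) → ℂ)
    (p q : Fin (2 * n + 1) → Polynomial ℂ)
    (hq : ∀ i, q i ≠ 0)
    (hcop : ∀ i, IsCoprime (p i) (q i))
    (hw : ∀ i z, (q i).eval z ≠ 0 → w i z = (p i).eval z / (q i).eval z)
    (hchain : ∀ z : ℂ, (∀ j, (q j).eval z ≠ 0) → ∀ i : Fin (2 * n + 1),
      deriv (fun t => w i t + w (i + 1) t) z + (w (i + 1) z) ^ 2 - (w i z) ^ 2 = a i)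
    (hsum : ∑ i, a i = -Δ)
    (hnz : ∀ i : Fin (2 * n + 1), ∃ z : ℂ,
      (∀ j, (q j).eval z ≠ 0) ∧ w i z + w (i + 1) z ≠ 0)
    (ζ : ℂ)
    (hpole : ∃ i₀ : Fin (2 * n + 1),
      Tendsto (fun z => ‖w i₀ z‖) (nhdsWithin ζ {ζ}ᶜ) atTop)
    (m : Fin (2 * n + 1) → ℤ) (g : Fin (2 * n + 1) → ℂ → ℂ)
    (hg : ∀ j, AnalyticAt ℂ (g j) ζ)
    (hdec : ∀ j, ∀ᶠ z in nhdsWithin ζ {ζ}ᶜ, w j z = (m j : ℂ) / (z - ζ) + g j z) :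
    ∀ (j : Fin (2 * n + 1)) (ℓ : ℕ), ℓ < (m j).natAbs →
      iteratedDeriv (2 * ℓ) (g j) ζ = 0 :=
  rational_dressing_chain_even_coefficients_general n w a q hq hchain ζ m g hg hdec
end

section
/- Let A : ℕ → ℂ be a sequence such that for every i, either A_{i+1} = −A_i or A_{i+1} = A_i + 1 (equivalently, −(A_i + A_{i+1}) + A_{i+1}² − A_i² = 0). Then for every i ≥ 1 there exists a natural number k with 1 ≤ k ≤ 2i such that A_i = (−1)^k · A_0 + k − i. -/
/-- If a sequence of residues satisfies `A_{i+1} = −A_i` or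
`A_{i+1} = A_i + 1` for every `i`, then for every `i ≥ 1` there is `1 ≤ k ≤ 2i` with
`A_i = (−1)^k A_0 + k − i`. -/
theorem residue_recurrence_form (A : ℕ → ℂ)
    (h : ∀ i : ℕ, A (i + 1) = -A i ∨ A (i + 1) = A i + 1) :
    ∀ i : ℕ, 1 ≤ i → ∃ k : ℕ, 1 ≤ k ∧ k ≤ 2 * i ∧
      A i = (-1) ^ k * A 0 + (k : ℂ) - (i : ℂ) := by
  intro i hi
  induction i with
  | zero => omega
  | succ n ih =>
    rcases hi.eq_or_lt with h1 | h1
    · -- n = 0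
      have hn : n = 0 := by omega
      subst hn
      rcases h 0 with h0 | h0
      · exact ⟨1, le_refl 1, by norm_num, by simp [h0]⟩
      · exact ⟨2, by norm_num, by norm_num, by push_cast [h0]; ring⟩
    · have hn : 1 ≤ n := by omega
      obtain ⟨k, hk1, hk2, hk⟩ := ih hn
      rcases h n with h0 | h0
      · refine ⟨2 * n + 1 - k, by omega, by omega, ?_⟩
        have hsign : ((-1 : ℂ)) ^ (2 * n + 1 - k) = -(-1) ^ k := by
          have : ((-1 : ℂ)) ^ (2 * n + 1 - k) * (-1) ^ k = (-1) ^ (2 * n + 1) := by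
            rw [← pow_add]; congr 1; omega
          have h2 : ((-1 : ℂ)) ^ (2 * n + 1) = -1 := by
            rw [pow_succ, pow_mul]; norm_num
          rcases Nat.even_or_odd k with he | he
          · rw [he.neg_one_pow] at this ⊢
            simpa [h2] using this
          · rw [he.neg_one_pow] at this ⊢
            have := this
            simp [h2] at this
            simp [this]
        rw [h0, hk, hsign]
        have : ((2 * n + 1 - k : ℕ) : ℂ) = 2 * n + 1 - k := by
          push_cast [Nat.cast_sub (by omega : k ≤ 2 * n + 1)]; ring
        rw [this]
        push_cast
        ring
      · refine ⟨k + 2, by omega, by omega, ?_⟩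
        rw [h0, hk]
        push_cast
        rw [pow_add]
        ring
end

section
/- Let n ≥ 0 and let A : ℤ → ℂ satisfy A_{i+2n+1} = A_i for all i ∈ ℤ, and for every i either A_{i+1} = −A_i or A_{i+1} = A_i + 1. Then for every i there exists an integer t with |t| ≤ n such that A_i = t; that is, every A_i is an integer of absolute value at most n. -/
/-- If a (2n+1)-periodic sequence satisfies `A_{i+1} = −A_i` or
`A_{i+1} = A_i + 1` for every `i`, then every `A_i` is an integer of absolute value
at most `n`. -/
theorem residue_recurrence_integer (n : ℕ) (A : ℤ → ℂ)
    (hper : ∀ i : ℤ, A (i + (2 * (n : ℤ) + 1)) = A i)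
    (h : ∀ i : ℤ, A (i + 1) = -A i ∨ A (i + 1) = A i + 1) :
    ∀ i : ℤ, ∃ t : ℤ, |t| ≤ (n : ℤ) ∧ A i = (t : ℂ) := by
  intro i
  -- invariant along the orbit
  have key : ∀ k : ℕ, ∃ e c : ℤ, (e = 1 ∨ e = -1) ∧
      A (i + (k : ℤ)) = (e : ℂ) * A i + (c : ℂ) ∧ |c| ≤ (k : ℤ) ∧
      (e = 1 ↔ Even (c + (k : ℤ))) := by
    intro k
    induction k with
    | zero =>
        exact ⟨1, 0, Or.inl rfl, by push_cast; ring, by simp, by simp⟩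
    | succ k ih =>
        obtain ⟨e, c, he, hA, hc, hpar⟩ := ih
        have hstep := h (i + (k : ℤ))
        have harg : i + ((k : ℤ) + 1) = (i + (k : ℤ)) + 1 := by ring
        rcases hstep with hs | hs
        · refine ⟨-e, -c, ?_, ?_, ?_, ?_⟩
          · rcases he with h1 | h1 <;> simp [h1]
          · push_cast
            rw [harg, hs, hA]; push_cast; ring
          · simpa using hc.trans (by omega)
          · constructor
            · intro h1
              have he2 : e = -1 := by omega
              have : ¬ Even (c + (k : ℤ)) := by
                intro hev
                have := hpar.mpr hev; omega
              have hodd : Odd (c + (k : ℤ)) := Int.not_even_iff_odd.mp this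
              obtain ⟨m, hm⟩ := hodd
              exact ⟨(k : ℤ) - m, by push_cast; omega⟩
            · intro hev
              by_contra hne
              have he1 : e = 1 := by rcases he with h1 | h1; exact h1; omega
              have := hpar.mp he1
              obtain ⟨m, hm⟩ := this
              obtain ⟨m', hm'⟩ := hev
              omega
        · refine ⟨e, c + 1, he, ?_, ?_, ?_⟩
          · push_cast
            rw [harg, hs, hA]; push_cast; ring
          · have := abs_add_le c 1
            simp at this
            push_cast
            omega
          · rw [hpar]
            constructor
            · rintro ⟨m, hm⟩; exact ⟨m + 1, by push_cast; omega⟩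
            · rintro ⟨m, hm⟩; exact ⟨m - 1, by push_cast; omega⟩
  obtain ⟨e, c, he, hA, hc, hpar⟩ := key (2 * n + 1)
  have hAper : A (i + ((2 * n + 1 : ℕ) : ℤ)) = A i := by
    have harg : i + ((2 * n + 1 : ℕ) : ℤ) = i + (2 * (n : ℤ) + 1) := by push_cast; ring
    rw [harg]; exact hper i
  rw [hAper] at hA
  have hne : e = -1 := by
    rcases he with h1 | h1
    · exfalso
      -- e = 1 : then c = 0, but parity says c + (2n+1) even
      have hc0 : (c : ℂ) = 0 := by
        rw [h1] at hA; push_cast at hA; linear_combination -hA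
      have hc0' : c = 0 := by exact_mod_cast hc0
      have hev := hpar.mp h1
      rw [hc0'] at hev
      obtain ⟨m, hm⟩ := hev
      push_cast at hm; omega
    · exact h1
  rw [hne] at hA hpar
  -- A i = c / 2
  have hceven : Even c := by
    have hnot : ¬ Even (c + ((2 * n + 1 : ℕ) : ℤ)) := by
      intro hev
      have := hpar.mpr hev; omega
    rcases Int.even_or_odd c with hc' | hc'
    · exact hc'
    · exfalso
      apply hnot
      obtain ⟨m, hm⟩ := hc'
      exact ⟨m + n + 1, by push_cast; omega⟩
  obtain ⟨t, ht⟩ := hceven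
  refine ⟨t, ?_, ?_⟩
  · have hb : |t + t| ≤ 2 * (n : ℤ) + 1 := by
      rw [← ht]; push_cast at hc; omega
    have habs : |t + t| = 2 * |t| := by
      rw [← two_mul, abs_mul]; simp
    have := abs_nonneg t
    omega
  · rw [ht] at hA
    push_cast at hA
    linear_combination hA / 2
end

section
/- Let n ≥ 0 and let A : ℤ → ℂ satisfy A_{i+2n+1} = A_i for all i ∈ ℤ, and for every i either A_{i+1} = −A_i or A_{i+1} = A_i + 1. Then there exists an index i with A_i = 0. In particular, the functions of a (2n+1)-cyclic dressing chain cannot all have a pole at one common point. -/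
/-- If a (2n+1)-periodic sequence satisfies `A_{i+1} = −A_i` or
`A_{i+1} = A_i + 1` for every `i`, then some `A_i` vanishes: the functions of a
(2n+1)-cyclic dressing chain cannot all have a pole at one common point. -/
theorem residue_recurrence_vanishes (n : ℕ) (A : ℤ → ℂ)
    (hper : ∀ i : ℤ, A (i + (2 * (n : ℤ) + 1)) = A i)
    (h : ∀ i : ℤ, A (i + 1) = -A i ∨ A (i + 1) = A i + 1) :
    ∃ i : ℤ, A i = 0 := by
  by_contra hc
  push_neg at hc
  -- Step 1: window invariant forcing every A i to be an integer
  have inv1 : ∀ (N : ℕ) (i : ℤ), ∃ s m : ℤ,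
      (s = 1 ∨ s = -1) ∧ A (i + (N : ℤ)) = (s : ℂ) * A i + (m : ℂ) ∧
      (((N : ℤ) + m) % 2 = 0 ↔ s = 1) := by
    intro N i
    induction N with
    | zero => exact ⟨1, 0, Or.inl rfl, by simp, by simp⟩
    | succ N ih =>
      obtain ⟨s, m, hs, hA, hpar⟩ := ih
      have hidx : i + ((N + 1 : ℕ) : ℤ) = (i + (N : ℤ)) + 1 := by push_cast; ring
      rcases h (i + (N : ℤ)) with h1 | h1
      · refine ⟨-s, -m, by omega, ?_, ?_⟩
        · rw [hidx, h1, hA]; push_cast; ring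
        · rcases hs with rfl | rfl <;> omega
      · refine ⟨s, m + 1, hs, ?_, ?_⟩
        · rw [hidx, h1, hA]; push_cast; ring
        · rcases hs with rfl | rfl <;> omega
  have hint : ∀ i : ℤ, ∃ t : ℤ, A i = (t : ℂ) := by
    intro i
    obtain ⟨s, m, hs, hA, hpar⟩ := inv1 (2 * n + 1) i
    have hcast : ((2 * n + 1 : ℕ) : ℤ) = 2 * (n : ℤ) + 1 := by push_cast; ring
    rw [hcast, hper i] at hA
    rcases hs with rfl | rfl
    · -- s = 1 : impossible by parity
      push_cast at hA
      have hm : (m : ℂ) = 0 := by linear_combination -hA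
      have hm0 : m = 0 := by exact_mod_cast hm
      exfalso
      omega
    · -- s = -1 : A i = m / 2 with m even
      push_cast at hA
      obtain ⟨t, ht⟩ : ∃ t : ℤ, m = 2 * t := ⟨m / 2, by omega⟩
      refine ⟨t, ?_⟩
      have h2 : (2 : ℂ) * A i = (m : ℂ) := by linear_combination hA
      rw [ht] at h2
      push_cast at h2
      linear_combination h2 / 2
  choose k hk using hint
  have hk0 : ∀ i : ℤ, k i ≠ 0 := by
    intro i hki
    exact hc i (by rw [hk i, hki]; simp)
  have hkper : ∀ i : ℤ, k (i + (2 * (n : ℤ) + 1)) = k i := by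
    intro i
    have := hper i
    rw [hk, hk] at this
    exact_mod_cast this
  have hkstep : ∀ i : ℤ, k (i + 1) = -k i ∨ k (i + 1) = k i + 1 := by
    intro i
    rcases h i with h1 | h1
    · left
      rw [hk, hk] at h1
      exact_mod_cast h1
    · right
      rw [hk, hk] at h1
      exact_mod_cast h1
  -- Step 2: sign/abs parity invariant
  have inv2 : ∀ (N : ℕ) (i : ℤ),
      ((0 < k (i + (N : ℤ))) ↔ (0 < k i)) ↔
      (((N : ℤ) + ((k (i + (N : ℤ))).natAbs : ℤ) + ((k i).natAbs : ℤ)) % 2 = 0) := by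
    intro N i
    induction N with
    | zero =>
      have : i + ((0 : ℕ) : ℤ) = i := by simp
      rw [this]
      omega
    | succ N ih =>
      have hidx : i + ((N + 1 : ℕ) : ℤ) = (i + (N : ℤ)) + 1 := by push_cast; ring
      rw [hidx]
      have h1 := hkstep (i + (N : ℤ))
      have h2 := hk0 (i + (N : ℤ))
      have h3 := hk0 ((i + (N : ℤ)) + 1)
      rcases h1 with h1 | h1 <;> rw [h1] at h3 ⊢ <;> omega
  -- conclude: contradiction at N = 2n+1
  have hfin := inv2 (2 * n + 1) 0
  have hcast : ((2 * n + 1 : ℕ) : ℤ) = 2 * (n : ℤ) + 1 := by push_cast; ring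
  rw [hcast, hkper 0] at hfin
  omega
end

section
/- Let n ≥ 0 and let m : ℤ → ℤ satisfy m_{i+2n+1} = m_i for all i ∈ ℤ, and for every i either m_{i+1} = −m_i or m_{i+1} = m_i + 1. Then the set S = {m_i : i ∈ ℤ} satisfies −S = S; that is, for every index i there exists an index j with m_j = −m_i. -/
/-- If a (2n+1)-periodic integer sequence satisfies `m_{i+1} = −m_i` or
`m_{i+1} = m_i + 1` for every `i`, then its set of values `S` satisfies `−S = S`. -/
theorem residue_set_symmetric (n : ℕ) (m : ℤ → ℤ)
    (hper : ∀ i : ℤ, m (i + (2 * (n : ℤ) + 1)) = m i)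
    (h : ∀ i : ℤ, m (i + 1) = -m i ∨ m (i + 1) = m i + 1) :
    ∀ i : ℤ, ∃ j : ℤ, m j = -(m i) := by
  intro i
  by_contra hc
  push_neg at hc
  rcases lt_trichotomy (m i) 0 with hvn | hv0 | hvp
  · -- Case m i < 0 : the band [m i, -(m i) - 1] is forward invariant.
    have key : ∀ k : ℕ, m i ≤ m (i + (k : ℤ)) ∧ m (i + (k : ℤ)) ≤ -(m i) - 1 := by
      intro k
      induction k with
      | zero => simp; omega
      | succ k ih =>
        have e : i + ((k + 1 : ℕ) : ℤ) = (i + (k : ℤ)) + 1 := by push_cast; ring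
        have hne := hc (i + ((k + 1 : ℕ) : ℤ))
        rw [e] at hne ⊢
        rcases h (i + (k : ℤ)) with hs | hs <;> rw [hs] at hne ⊢ <;> omega
    have h2 := key (2 * n)
    have hp := hper i
    have hs := h (i + ((2 * n : ℕ) : ℤ))
    have e2 : (i + ((2 * n : ℕ) : ℤ)) + 1 = i + (2 * (n : ℤ) + 1) := by push_cast; ring
    rw [e2, hp] at hs
    rcases hs with hs | hs <;> omega
  · -- Case m i = 0 : m i = -(m i) itself.
    exact hc i (by omega)
  · -- Case m i > 0 : the region {x | x > m i ∨ x < -(m i)} is forward invariant after one step.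
    have key : ∀ k : ℕ, m i < m (i + (k : ℤ) + 1) ∨ m (i + (k : ℤ) + 1) < -(m i) := by
      intro k
      induction k with
      | zero =>
        have hne := hc (i + 1)
        simp only [Nat.cast_zero, add_zero]
        rcases h i with hs | hs <;> rw [hs] at hne ⊢ <;> omega
      | succ k ih =>
        have e : i + ((k + 1 : ℕ) : ℤ) + 1 = (i + (k : ℤ) + 1) + 1 := by push_cast; ring
        have hne := hc (i + ((k + 1 : ℕ) : ℤ) + 1)
        rw [e] at hne ⊢
        rcases h (i + (k : ℤ) + 1) with hs | hs <;> rw [hs] at hne ⊢ <;> omega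
    have h2 := key (2 * n)
    have hp := hper i
    have e2 : i + ((2 * n : ℕ) : ℤ) + 1 = i + (2 * (n : ℤ) + 1) := by push_cast; ring
    rw [e2, hp] at h2
    omega
end

section
/- Let n ≥ 0 and let m : ℤ → ℤ satisfy m_{i+2n+1} = m_i for all i ∈ ℤ, and for every i either m_{i+1} = −m_i or m_{i+1} = m_i + 1. Let m* := max{m_i : i ∈ ℤ} (which exists since the sequence is periodic). Then the set of values {m_i : i ∈ ℤ} is exactly the integer interval {t ∈ ℤ : −m* ≤ t ≤ m*}. -/
/-- Lower bound: every value of the chain is at least `-mstar`. -/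
lemma chain_lb (n : ℕ) (m : ℤ → ℤ)
    (hper : ∀ i : ℤ, m (i + (2 * (n : ℤ) + 1)) = m i)
    (h : ∀ i : ℤ, m (i + 1) = -m i ∨ m (i + 1) = m i + 1)
    (mstar : ℤ) (hub : ∀ i : ℤ, m i ≤ mstar) :
    ∀ i : ℤ, -mstar ≤ m i := by
  by_contra hc
  push_neg at hc
  obtain ⟨i, hi⟩ := hc
  have key : ∀ k : ℕ, m (i - k) ≤ m i - k := by
    intro k
    induction k with
    | zero => simp
    | succ k ih =>
      have e : i - ((k:ℤ)+1) + 1 = i - k := by ring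
      have hk : (0:ℤ) ≤ (k:ℤ) := Int.natCast_nonneg k
      rcases h (i - ((k:ℤ)+1)) with hr | hp
      · rw [e] at hr
        have h1 := hub (i - ((k:ℤ)+1))
        push_cast
        linarith
      · rw [e] at hp
        push_cast
        linarith
  have hp := hper (i - (2*(n:ℤ)+1))
  have e : i - (2*(n:ℤ)+1) + (2*(n:ℤ)+1) = i := by ring
  rw [e] at hp
  have h2 := key (2*n+1)
  rw [show ((2*n+1 : ℕ):ℤ) = 2*(n:ℤ)+1 by push_cast; ring] at h2
  rw [hp] at h2
  have hn : (0:ℤ) ≤ (n:ℤ) := Int.natCast_nonneg n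
  linarith

/-- Key lemma: a value `t` with `-mstar ≤ t ≤ 0` must be attained. -/
lemma chain_key (n : ℕ) (m : ℤ → ℤ)
    (hper : ∀ i : ℤ, m (i + (2 * (n : ℤ) + 1)) = m i)
    (h : ∀ i : ℤ, m (i + 1) = -m i ∨ m (i + 1) = m i + 1)
    (mstar t : ℤ) (hmem : ∃ i : ℤ, m i = mstar) (hub : ∀ i : ℤ, m i ≤ mstar)
    (ht0 : t ≤ 0) (htl : -mstar ≤ t) (hnot : ∀ i : ℤ, m i ≠ t) : False := by
  obtain ⟨i0, h0⟩ := hmem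
  have step : ∀ i : ℤ, (-t ≤ m i ∨ m i < t) →
      ((-t ≤ m (i+1) ∨ m (i+1) < t) ∧
        ((if m (i+1) < t then (1:ZMod 2) else 0) + ((m (i+1) : ZMod 2)) =
         (if m i < t then (1:ZMod 2) else 0) + ((m i : ZMod 2)) + 1)) := by
    intro i hI
    rcases h i with hr | hp
    · rcases hI with hge | hlt
      · -- reflect from high: go to below t
        have hlt1 : m (i+1) < t := lt_of_le_of_ne (by linarith) (hnot (i+1))
        have hnl : ¬ m i < t := not_lt.mpr (by linarith)
        refine ⟨Or.inr hlt1, ?_⟩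
        rw [if_pos hlt1, if_neg hnl, hr]
        push_cast
        generalize ((m i : ZMod 2)) = x
        revert x; decide
      · -- reflect from low: go to high
        have hge1 : -t ≤ m (i+1) := by rw [hr]; linarith
        have hnl : ¬ m (i+1) < t := not_lt.mpr (by rw [hr]; linarith)
        refine ⟨Or.inl hge1, ?_⟩
        rw [if_neg hnl, if_pos hlt, hr]
        push_cast
        generalize ((m i : ZMod 2)) = x
        revert x; decide
    · rcases hI with hge | hlt
      · have hge1 : -t ≤ m (i+1) := by linarith
        have hnl : ¬ m i < t := not_lt.mpr (by linarith)
        have hnl1 : ¬ m (i+1) < t := not_lt.mpr (by linarith)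
        refine ⟨Or.inl hge1, ?_⟩
        rw [if_neg hnl, if_neg hnl1, hp]
        push_cast
        ring
      · have hlt1 : m (i+1) < t := lt_of_le_of_ne (by linarith) (hnot (i+1))
        refine ⟨Or.inr hlt1, ?_⟩
        rw [if_pos hlt1, if_pos hlt, hp]
        push_cast
        ring
  have main : ∀ k : ℕ, (-t ≤ m (i0 + k) ∨ m (i0 + k) < t) ∧
      ((if m (i0 + k) < t then (1:ZMod 2) else 0) + (m (i0 + k) : ZMod 2) =
       (if m i0 < t then (1:ZMod 2) else 0) + (m i0 : ZMod 2) + (k : ZMod 2)) := by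
    intro k
    induction k with
    | zero => simp; left; linarith
    | succ k ih =>
      have e : i0 + ((k+1 : ℕ) : ℤ) = (i0 + k) + 1 := by push_cast; ring
      rw [e]
      obtain ⟨h1, h2⟩ := step (i0 + k) ih.1
      refine ⟨h1, ?_⟩
      rw [h2, ih.2]
      push_cast
      ring
  have hfin := (main (2*n+1)).2
  have e : i0 + ((2*n+1 : ℕ) : ℤ) = i0 + (2*(n:ℤ)+1) := by push_cast; ring
  rw [e, hper i0] at hfin
  have hc : ((2*n+1 : ℕ) : ZMod 2) = 1 := by
    push_cast
    rw [show ((2:ZMod 2)) = 0 by decide]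
    ring
  rw [hc] at hfin
  set X : ZMod 2 := (if m i0 < t then (1:ZMod 2) else 0) + (m i0 : ZMod 2) with hX
  have h01 : (0 : ZMod 2) = 1 := by
    have h' : X + 0 = X + 1 := by rw [add_zero]; exact hfin
    exact add_left_cancel h'
  exact absurd h01 (by decide)

/-- If a (2n+1)-periodic integer sequence satisfies `m_{i+1} = −m_i` or
`m_{i+1} = m_i + 1` for every `i`, and `m*` is its maximum value, then its set of values is
exactly the integer interval `[−m*, m*]`. -/
theorem residue_set_interval (n : ℕ) (m : ℤ → ℤ)
    (hper : ∀ i : ℤ, m (i + (2 * (n : ℤ) + 1)) = m i)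
    (h : ∀ i : ℤ, m (i + 1) = -m i ∨ m (i + 1) = m i + 1)
    (mstar : ℤ) (hmem : ∃ i : ℤ, m i = mstar) (hub : ∀ i : ℤ, m i ≤ mstar) :
    Set.range m = Set.Icc (-mstar) mstar := by
  have hlb := chain_lb n m hper h mstar hub
  have hneg : ∃ j : ℤ, m j = -mstar := by
    obtain ⟨i0, h0⟩ := hmem
    rcases h i0 with hr | hp
    · exact ⟨i0+1, by rw [hr, h0]⟩
    · exfalso; have := hub (i0+1); rw [hp, h0] at this; linarith
  ext t
  simp only [Set.mem_range, Set.mem_Icc]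
  constructor
  · rintro ⟨i, rfl⟩; exact ⟨hlb i, hub i⟩
  · rintro ⟨h1, h2⟩
    by_contra hn
    push_neg at hn
    rcases le_or_gt t 0 with ht | ht
    · exact chain_key n m hper h mstar t hmem hub ht h1 hn
    · -- use the reversed-negated chain m' i = -m(-i)
      set m' : ℤ → ℤ := fun i => -m (-i) with hm'
      have hper' : ∀ i : ℤ, m' (i + (2 * (n : ℤ) + 1)) = m' i := by
        intro i
        simp only [hm']
        have := hper (-i - (2*(n:ℤ)+1))
        rw [show -i - (2*(n:ℤ)+1) + (2*(n:ℤ)+1) = -i by ring] at this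
        rw [show -(i + (2*(n:ℤ)+1)) = -i - (2*(n:ℤ)+1) by ring, this]
      have h' : ∀ i : ℤ, m' (i + 1) = -m' i ∨ m' (i + 1) = m' i + 1 := by
        intro i
        simp only [hm']
        rcases h (-(i+1)) with hr | hp
        · rw [show -(i+1) + 1 = -i by ring] at hr
          left
          rw [show -(-m (-i)) = m (-i) from neg_neg _]
          linarith
        · rw [show -(i+1) + 1 = -i by ring] at hp
          right
          linarith
      have hmem' : ∃ i : ℤ, m' i = mstar := by
        obtain ⟨j, hj⟩ := hneg
        exact ⟨-j, by simp only [hm', neg_neg, hj]⟩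
      have hub' : ∀ i : ℤ, m' i ≤ mstar := by
        intro i
        simp only [hm']
        have := hlb (-i)
        linarith
      have hnot' : ∀ i : ℤ, m' i ≠ -t := by
        intro i hc
        simp only [hm'] at hc
        exact hn (-i) (by linarith)
      exact chain_key n m' hper' h' mstar (-t) hmem' hub' (by linarith) (by linarith) hnot'
end

section
/- For every Maya diagram M there exist a unique natural number g and a unique strictly increasing tuple of integers β_0 < β_1 < ⋯ < β_{2g} such that M = {j ∈ ℤ : j < β_0} ∪ {j ∈ ℤ : β_1 ≤ j < β_2} ∪ ⋯ ∪ {j ∈ ℤ : β_{2g−1} ≤ j < β_{2g}}. Moreover {β_0, β_1, …, β_{2g}} = (M+1) ⊖ M; in particular the symmetric difference (M+1) ⊖ M is a finite set of odd cardinality 2g+1, where g is the genus of M. -/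
/-- The Maya diagram with block coordinates `β = (β_0, β_1, …, β_{2g})`:
`(−∞, β_0) ∪ [β_1, β_2) ∪ ⋯ ∪ [β_{2g−1}, β_{2g})`. -/
def blockSet (p : (g : ℕ) × (Fin (2 * g + 1) → ℤ)) : Set ℤ :=
  {j : ℤ | j < p.2 0} ∪
    ⋃ l : Fin p.1,
      Set.Ico (p.2 ⟨2 * (l : ℕ) + 1, by have := l.isLt; omega⟩)
        (p.2 ⟨2 * (l : ℕ) + 2, by have := l.isLt; omega⟩)

open Finset

namespace MayaAux

/-- jump set -/
def jmp (M : Set ℤ) : Set ℤ := {x | ¬ (x - 1 ∈ M ↔ x ∈ M)}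

lemma mem_image_add_one {M : Set ℤ} {x : ℤ} : x ∈ (fun y => y + 1) '' M ↔ x - 1 ∈ M :=
  ⟨by rintro ⟨y, hy, rfl⟩; simpa, fun h => ⟨x - 1, h, by ring⟩⟩

lemma symmDiff_eq (M : Set ℤ) : symmDiff ((fun x => x + 1) '' M) M = jmp M := by
  ext x
  simp only [symmDiff_def, Set.mem_union, Set.mem_diff, mem_image_add_one, jmp,
    Set.mem_setOf_eq, Set.sup_eq_union]
  tauto

/-- count of elements of T that are ≤ x -/
def cntT (T : Finset ℤ) (x : ℤ) : ℕ := (T.filter (· ≤ x)).card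

lemma cntT_succ (T : Finset ℤ) (x : ℤ) :
    cntT T x = cntT T (x - 1) + (if x ∈ T then 1 else 0) := by
  classical
  unfold cntT
  have hsplit : T.filter (· ≤ x) = T.filter (· ≤ x - 1) ∪ T.filter (· = x) := by
    ext t
    simp only [mem_filter, mem_union]
    constructor
    · rintro ⟨ht, hle⟩
      rcases eq_or_lt_of_le hle with h | h
      · exact Or.inr ⟨ht, h⟩
      · exact Or.inl ⟨ht, by omega⟩
    · rintro (⟨ht, hle⟩ | ⟨ht, rfl⟩)
      · exact ⟨ht, by omega⟩
      · exact ⟨ht, le_refl _⟩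
  rw [hsplit, card_union_of_disjoint]
  · congr 1
    rw [filter_eq']
    split <;> simp
  · rw [disjoint_left]
    rintro t ht1 ht2
    simp only [mem_filter] at ht1 ht2
    omega

lemma parity_M {M : Set ℤ} {T : Finset ℤ}
    (hT : ∀ x : ℤ, x ∈ T ↔ ¬(x - 1 ∈ M ↔ x ∈ M))
    {a : ℤ} (ha : ∀ x ≤ a, x ∈ M) (haT : ∀ t ∈ T, a < t) :
    ∀ x : ℤ, x ∈ M ↔ Even (cntT T x) := by
  have key : ∀ n : ℕ, ∀ x : ℤ, (x - a).toNat = n → (x ∈ M ↔ Even (cntT T x)) := by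
    intro n
    induction n with
    | zero =>
      intro x hx
      have hxa : x ≤ a := by omega
      have : T.filter (· ≤ x) = ∅ := by
        rw [filter_eq_empty_iff]
        intro t ht
        have := haT t ht; omega
      simp [cntT, this, ha x hxa]
    | succ n ih =>
      intro x hx
      have hprev : ((x - 1) - a).toNat = n := by omega
      have ihx := ih (x - 1) hprev
      rw [cntT_succ]
      by_cases hxT : x ∈ T
      · have hflip := (hT x).mp hxT
        simp only [hxT, if_pos, Nat.even_add_one]
        tauto
      · have heq : (x - 1 ∈ M ↔ x ∈ M) := by
          by_contra h
          exact hxT ((hT x).mpr h)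
        simp only [hxT, if_neg, not_false_iff, Nat.add_zero]
        tauto
  intro x
  exact key (x - a).toNat x rfl

/-- count for a Fin-indexed family -/
def cntF {n : ℕ} (β : Fin n → ℤ) (x : ℤ) : ℕ := (univ.filter fun i => β i ≤ x).card

lemma le_iff_lt_cntF {n : ℕ} {β : Fin n → ℤ} (hβ : StrictMono β) (x : ℤ) (i : Fin n) :
    β i ≤ x ↔ (i : ℕ) < cntF β x := by
  constructor
  · intro h
    have hsub : Finset.Iic i ⊆ univ.filter fun j => β j ≤ x := by
      intro j hj
      simp only [mem_Iic] at hj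
      simp only [mem_filter, mem_univ, true_and]
      exact le_trans (hβ.monotone hj) h
    have := card_le_card hsub
    rw [Fin.card_Iic] at this
    unfold cntF
    omega
  · intro h
    by_contra hc
    push_neg at hc
    have hsub : (univ.filter fun j => β j ≤ x) ⊆ Finset.Iio i := by
      intro j hj
      simp only [mem_filter, mem_univ, true_and] at hj
      simp only [mem_Iio]
      by_contra hj2
      push_neg at hj2
      exact absurd (le_trans (hβ.monotone hj2) hj) (not_le.mpr hc)
    have := card_le_card hsub
    rw [Fin.card_Iio] at this
    unfold cntF at h
    omega

lemma cntF_le {n : ℕ} (β : Fin n → ℤ) (x : ℤ) : cntF β x ≤ n := by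
  unfold cntF
  calc (univ.filter fun i => β i ≤ x).card ≤ (univ : Finset (Fin n)).card :=
        card_le_card (filter_subset _ _)
  _ = n := by simp

lemma mem_blockSet_iff {g : ℕ} {β : Fin (2 * g + 1) → ℤ} (hβ : StrictMono β) (x : ℤ) :
    x ∈ blockSet ⟨g, β⟩ ↔ Even (cntF β x) := by
  have hle := le_iff_lt_cntF hβ x
  have hcle := cntF_le β x
  constructor
  · rintro (hx | hx)
    · have hall : ∀ i : Fin (2 * g + 1), ¬ β i ≤ x := by
        intro i hi
        exact absurd (le_trans (hβ.monotone (Fin.zero_le i)) hi) (not_le.mpr hx)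
      have h0 : cntF β x = 0 := by
        unfold cntF
        rw [card_eq_zero, filter_eq_empty_iff]
        intro i _
        exact hall i
      simp [h0]
    · simp only [Set.mem_iUnion] at hx
      obtain ⟨l, hl⟩ := hx
      rw [Set.mem_Ico] at hl
      have h1 : (2 * (l : ℕ) + 1) < cntF β x := (hle ⟨2 * l + 1, by omega⟩).mp hl.1
      have h2 : ¬ ((2 * (l : ℕ) + 2) < cntF β x) := fun h =>
        absurd ((hle ⟨2 * l + 2, by omega⟩).mpr h) (not_le.mpr hl.2)
      have : cntF β x = 2 * (l : ℕ) + 2 := by omega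
      rw [this]
      exact ⟨(l : ℕ) + 1, by ring⟩
  · intro hev
    rcases Nat.eq_zero_or_pos (cntF β x) with h0 | hpos
    · left
      show x < β 0
      by_contra hc
      push_neg at hc
      have := (hle 0).mp hc
      omega
    · obtain ⟨m, hm⟩ := hev
      have hm1 : 1 ≤ m := by omega
      have hml : m - 1 < g := by omega
      right
      simp only [Set.mem_iUnion]
      refine ⟨⟨m - 1, hml⟩, ?_⟩
      rw [Set.mem_Ico]
      constructor
      · exact (hle ⟨2 * (m - 1) + 1, by omega⟩).mpr (by simp; omega)
      · by_contra hc
        push_neg at hc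
        have := (hle ⟨2 * (m - 1) + 2, by omega⟩).mp hc
        simp at this
        omega

lemma cntF_eq_cntT {n : ℕ} {β : Fin n → ℤ} (hinj : Function.Injective β) {T : Finset ℤ}
    (hr : Set.range β = ↑T) (x : ℤ) : cntF β x = cntT T x := by
  unfold cntF cntT
  rw [← Finset.card_image_of_injective _ hinj]
  congr 1
  ext t
  simp only [mem_image, mem_filter, mem_univ, true_and]
  constructor
  · rintro ⟨i, hi, rfl⟩
    refine ⟨?_, hi⟩
    have : β i ∈ Set.range β := ⟨i, rfl⟩
    rw [hr] at this
    exact_mod_cast this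
  · rintro ⟨ht, hle⟩
    have : t ∈ Set.range β := by rw [hr]; exact_mod_cast ht
    obtain ⟨i, rfl⟩ := this
    exact ⟨i, hle, rfl⟩

lemma range_coe {n : ℕ} (β : Fin n → ℤ) : Set.range β = ↑(univ.image β) := by
  rw [coe_image, coe_univ, Set.image_univ]

lemma range_eq_jmp {M : Set ℤ} {g : ℕ} {β : Fin (2 * g + 1) → ℤ} (hβ : StrictMono β)
    (hM : M = blockSet ⟨g, β⟩) : Set.range β = jmp M := by
  have hmem : ∀ y : ℤ, (y ∈ M ↔ Even (cntF β y)) := fun y => by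
    rw [hM]; exact mem_blockSet_iff hβ y
  have hcnt := cntF_eq_cntT hβ.injective (range_coe β)
  ext x
  simp only [jmp, Set.mem_setOf_eq]
  rw [hmem x, hmem (x - 1), hcnt x, hcnt (x - 1), cntT_succ _ x]
  by_cases hx : x ∈ univ.image β
  · have hxr : x ∈ Set.range β := by rw [range_coe β]; exact_mod_cast hx
    rw [if_pos hx, Nat.even_add_one]
    constructor
    · intro _; tauto
    · intro _; exact hxr
  · have hxr : x ∉ Set.range β := by rw [range_coe β]; simpa using hx
    rw [if_neg hx]
    simp only [Nat.add_zero]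
    tauto

lemma ncard_range {n : ℕ} {β : Fin n → ℤ} (hinj : Function.Injective β) :
    (Set.range β).ncard = n := by
  rw [range_coe β, Set.ncard_coe_finset, card_image_of_injective _ hinj, card_univ,
    Fintype.card_fin]

end MayaAux

/-- Every Maya diagram `M` has unique block coordinates: a unique genus
`g` and a unique strictly increasing tuple `β_0 < ⋯ < β_{2g}` with
`M = (−∞,β_0) ∪ [β_1,β_2) ∪ ⋯ ∪ [β_{2g−1},β_{2g})`; moreover
`{β_0,…,β_{2g}} = (M+1) ⊖ M`, so the symmetric difference `(M+1) ⊖ M` is a finite set of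
odd cardinality `2g+1`. -/
theorem maya_block_coordinates (M : Set ℤ)
    (h1 : {m ∈ M | 0 ≤ m}.Finite)
    (h2 : {m : ℤ | m < 0 ∧ m ∉ M}.Finite) :
    (∃! p : (g : ℕ) × (Fin (2 * g + 1) → ℤ), StrictMono p.2 ∧ M = blockSet p) ∧
    (∀ (g : ℕ) (β : Fin (2 * g + 1) → ℤ), StrictMono β → M = blockSet ⟨g, β⟩ →
      Set.range β = symmDiff ((fun x => x + 1) '' M) M ∧
      (symmDiff ((fun x => x + 1) '' M) M).Finite ∧
      (symmDiff ((fun x => x + 1) '' M) M).ncard = 2 * g + 1) := by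
  classical
  -- the jump set is finite
  have hjfin : (MayaAux.jmp M).Finite := by
    apply Set.Finite.subset
      (Set.Finite.union (Set.Finite.union (h1.union (h1.image (· + 1)))
        (h2.union (h2.image (· + 1)))) (Set.finite_singleton 0))
    intro x hx
    simp only [MayaAux.jmp, Set.mem_setOf_eq] at hx
    simp only [Set.mem_union, Set.mem_setOf_eq, Set.mem_image, Set.mem_singleton_iff]
    by_cases hxM : x ∈ M
    · have hx1 : x - 1 ∉ M := by tauto
      by_cases h0 : 0 ≤ x
      · exact Or.inl (Or.inl (Or.inl ⟨hxM, h0⟩))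
      · exact Or.inl (Or.inr (Or.inr ⟨x - 1, ⟨by omega, hx1⟩, by ring⟩))
    · have hx1 : x - 1 ∈ M := by tauto
      by_cases h0 : 0 ≤ x - 1
      · exact Or.inl (Or.inl (Or.inr ⟨x - 1, ⟨hx1, h0⟩, by ring⟩))
      · by_cases h0' : x < 0
        · exact Or.inl (Or.inr (Or.inl ⟨h0', hxM⟩))
        · exact Or.inr (by omega)
  set T : Finset ℤ := hjfin.toFinset with hTdef
  have hTmem : ∀ x : ℤ, x ∈ T ↔ ¬(x - 1 ∈ M ↔ x ∈ M) := by
    intro x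
    simp [hTdef, MayaAux.jmp]
  -- lower bound
  obtain ⟨a, ha, haT⟩ : ∃ a : ℤ, (∀ x ≤ a, x ∈ M) ∧ (∀ t ∈ T, a < t) := by
    set A : Finset ℤ := (T ∪ h2.toFinset) ∪ {0} with hA
    have hAne : A.Nonempty := ⟨0, by simp [hA]⟩
    refine ⟨A.min' hAne - 1, ?_, ?_⟩
    · intro x hxa
      by_contra hxM
      have hx0 : x < 0 := by
        have : (0 : ℤ) ∈ A := by simp [hA]
        have := A.min'_le 0 this
        omega
      have hxA : x ∈ A := by simp [hA, Set.Finite.mem_toFinset]; tauto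
      have := A.min'_le x hxA
      omega
    · intro t ht
      have : t ∈ A := by simp [hA]; tauto
      have := A.min'_le t this
      omega
  -- upper bound
  obtain ⟨b, hb, hbT⟩ : ∃ b : ℤ, (∀ x, b ≤ x → x ∉ M) ∧ (∀ t ∈ T, t ≤ b) := by
    set B : Finset ℤ := (T ∪ h1.toFinset) ∪ {0} with hB
    have hBne : B.Nonempty := ⟨0, by simp [hB]⟩
    refine ⟨B.max' hBne + 1, ?_, ?_⟩
    · intro x hbx hxM
      have hx0 : 0 ≤ x := by
        have : (0 : ℤ) ∈ B := by simp [hB]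
        have := B.le_max' 0 this
        omega
      have hxB : x ∈ B := by simp [hB, Set.Finite.mem_toFinset]; tauto
      have := B.le_max' x hxB
      omega
    · intro t ht
      have : t ∈ B := by simp [hB]; tauto
      have := B.le_max' t this
      omega
  have hpar := MayaAux.parity_M hTmem ha haT
  -- T.card is odd
  have hcntb : MayaAux.cntT T b = T.card := by
    unfold MayaAux.cntT
    congr 1
    rw [filter_eq_self]
    intro t ht
    exact hbT t ht
  have hodd : ¬ Even T.card := by
    rw [← hcntb]
    intro hev
    exact hb b le_rfl ((hpar b).mpr hev)
  obtain ⟨g, hg⟩ : ∃ g : ℕ, T.card = 2 * g + 1 := by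
    rcases Nat.even_or_odd T.card with h | h
    · exact absurd h hodd
    · obtain ⟨g, hg⟩ := h; exact ⟨g, by omega⟩
  -- the canonical coordinates
  set β : Fin (2 * g + 1) → ℤ := ⇑(T.orderEmbOfFin hg) with hβdef
  have hβmono : StrictMono β := (T.orderEmbOfFin hg).strictMono
  have hβrange : Set.range β = ↑T := T.range_orderEmbOfFin hg
  have hβcnt := MayaAux.cntF_eq_cntT hβmono.injective hβrange
  have hMeq : M = blockSet ⟨g, β⟩ := by
    ext x
    rw [hpar x, MayaAux.mem_blockSet_iff hβmono x, hβcnt x]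
  have hTjmp : (↑T : Set ℤ) = MayaAux.jmp M := Set.Finite.coe_toFinset hjfin
  -- key: any valid coordinates have range equal to the jump set
  have hrange : ∀ (g' : ℕ) (β' : Fin (2 * g' + 1) → ℤ), StrictMono β' →
      M = blockSet ⟨g', β'⟩ → Set.range β' = MayaAux.jmp M := fun g' β' h1' h2' =>
    MayaAux.range_eq_jmp h1' h2'
  have hcard : ∀ (g' : ℕ) (β' : Fin (2 * g' + 1) → ℤ), StrictMono β' →
      M = blockSet ⟨g', β'⟩ → 2 * g' + 1 = T.card := by
    intro g' β' h1' h2'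
    have := MayaAux.ncard_range h1'.injective (β := β')
    rw [hrange g' β' h1' h2', ← hTjmp, Set.ncard_coe_finset] at this
    omega
  constructor
  · refine ⟨⟨g, β⟩, ⟨hβmono, hMeq⟩, ?_⟩
    rintro ⟨g', β'⟩ ⟨h1', h2'⟩
    have hgg : g' = g := by
      have := hcard g' β' h1' h2'
      omega
    subst hgg
    have hβ'eq : β' = T.orderEmbOfFin hg := by
      apply Finset.orderEmbOfFin_unique hg _ h1'
      intro i
      have : β' i ∈ Set.range β' := ⟨i, rfl⟩
      rw [hrange g' β' h1' h2', ← hTjmp] at this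
      exact_mod_cast this
    simp only [Sigma.mk.inj_iff, heq_eq_eq]
    exact ⟨trivial, hβ'eq⟩
  · intro g' β' h1' h2'
    rw [MayaAux.symmDiff_eq]
    refine ⟨hrange g' β' h1' h2', hjfin, ?_⟩
    · rw [← hrange g' β' h1' h2', MayaAux.ncard_range h1'.injective]
end

section
/- Let M be a Maya diagram and let k ≥ 1 be an integer. For i = 0,…,k−1 let M^{(i)} := {m ∈ ℤ : km + i ∈ M} be the k-modular decomposition of M. Then each M^{(i)} is a Maya diagram, and card((M+k) ⊖ M) = Σ_{i=0}^{k−1} card((M^{(i)}+1) ⊖ M^{(i)}). In particular, if g_i denotes the genus of M^{(i)} (so card((M^{(i)}+1) ⊖ M^{(i)}) = 2g_i + 1), then M is (p,k)-cyclic with p = (2g_0+1) + ⋯ + (2g_{k−1}+1): flipping M at every element of the finite set (M+k) ⊖ M transforms M into M+k, and this set has cardinality p. -/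
/-!
Write `M^{(i)} = f_i⁻¹' M` with `f_i x = k x + i`. Since `f_i (x - 1) = f_i x - k`, the shift by
`1` on `M^{(i)}` corresponds to the shift by `k` on `M`, so `(M^{(i)} + 1) ⊖ M^{(i)}` is the
`f_i`-preimage of `(M + k) ⊖ M`; as the `f_i`, `0 ≤ i < k`, enumerate the residue classes mod `k`,
the cardinalities add up. Finiteness comes from comparing every set with the negative integers.
-/

open Set

def IsMaya (M : Set ℤ) : Prop := (symmDiff M (Iio 0)).Finite

lemma isMaya_iff {M : Set ℤ} :
    IsMaya M ↔ {m ∈ M | 0 ≤ m}.Finite ∧ {m : ℤ | m < 0 ∧ m ∉ M}.Finite := by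
  have h : symmDiff M (Iio 0) = {m ∈ M | 0 ≤ m} ∪ {m : ℤ | m < 0 ∧ m ∉ M} := by
    ext m
    simp only [mem_symmDiff, mem_Iio, mem_union, mem_ofPred_eq, not_lt]
  rw [IsMaya, h, finite_union]

lemma IsMaya.finite_symmDiff_image_add {M : Set ℤ} (hM : IsMaya M) (k : ℤ) :
    (symmDiff ((· + k) '' M) M).Finite := by
  have hshift : symmDiff ((· + k) '' M) (Iio k) = (· + k) '' symmDiff M (Iio 0) := by
    rw [image_symmDiff (add_left_injective k), image_add_const_Iio, zero_add]
  have hIio : (symmDiff (Iio k) (Iio (0 : ℤ))).Finite :=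
    (finite_Ico (min k 0) (max k 0)).subset fun m hm => by
      simp only [mem_symmDiff, mem_Iio] at hm
      simp only [mem_Ico]
      omega
  -- `(M + k) ⊖ M ⊆ ((M + k) ⊖ Iio k) ∪ (Iio k ⊖ Iio 0) ∪ (Iio 0 ⊖ M)`
  refine Finite.subset ?_ ((symmDiff_triangle _ (Iio k) _).trans
    (sup_le_sup_left (symmDiff_triangle _ (Iio 0) _) _))
  rw [hshift, symmDiff_comm (Iio 0) M]
  exact (hM.image _).union (hIio.union hM)

def modularPart (k i : ℤ) (M : Set ℤ) : Set ℤ := (fun x => k * x + i) ⁻¹' M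

lemma mul_add_injective {k : ℤ} (hk : k ≠ 0) (i : ℤ) :
    Function.Injective (fun x : ℤ => k * x + i) :=
  fun _ _ h => mul_left_cancel₀ hk (add_right_cancel h)

lemma modularPart_Iio_zero {k i : ℤ} (hi : 0 ≤ i) (hik : i < k) :
    modularPart k i (Iio 0) = Iio 0 := by
  ext x
  simp only [modularPart, mem_preimage, mem_Iio]
  constructor
  · intro h; nlinarith
  · intro h; nlinarith

lemma isMaya_modularPart {M : Set ℤ} (hM : IsMaya M) {k i : ℤ} (hi : 0 ≤ i) (hik : i < k) :
    IsMaya (modularPart k i M) := by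
  rw [IsMaya, ← modularPart_Iio_zero hi hik, modularPart, modularPart, ← preimage_symmDiff]
  exact hM.preimage (mul_add_injective (by omega) i).injOn

lemma image_add_one_modularPart (k i : ℤ) (M : Set ℤ) :
    (· + 1) '' modularPart k i M = modularPart k i ((· + k) '' M) := by
  simp only [modularPart, image_add_right, ← preimage_comp]
  congr 1
  ext x
  simp only [Function.comp_apply]
  ring

lemma symmDiff_image_add_one_modularPart (k i : ℤ) (M : Set ℤ) :
    symmDiff ((· + 1) '' modularPart k i M) (modularPart k i M) =
      modularPart k i (symmDiff ((· + k) '' M) M) := by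
  rw [image_add_one_modularPart, modularPart, modularPart, modularPart, preimage_symmDiff]

lemma range_mul_add {k i : ℤ} (hi : 0 ≤ i) (hik : i < k) :
    range (fun x : ℤ => k * x + i) = {n | n % k = i} := by
  ext n
  simp only [mem_range, mem_ofPred_eq]
  constructor
  · rintro ⟨x, rfl⟩
    rw [add_comm, Int.add_mul_emod_self_left, Int.emod_eq_of_lt hi hik]
  · intro h
    exact ⟨n / k, by rw [← h, Int.mul_ediv_add_emod]⟩

lemma ncard_modularPart {k i : ℤ} (hi : 0 ≤ i) (hik : i < k) (S : Set ℤ) :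
    (modularPart k i S).ncard = {n ∈ S | n % k = i}.ncard := by
  rw [← ncard_image_of_injective _ (mul_add_injective (k := k) (by omega) i), modularPart,
    image_preimage_eq_inter_range, range_mul_add hi hik]
  rfl

lemma ncard_eq_sum_ncard_modularPart {k : ℕ} (hk : 0 < k) {S : Set ℤ} (hS : S.Finite) :
    S.ncard = ∑ i ∈ Finset.range k, (modularPart k i S).ncard := by
  classical
  have hmaps : MapsTo (· % (k : ℤ)) hS.toFinset
      (((Finset.range k).map Nat.castEmbedding : Finset ℤ) : Set ℤ) := by
    intro n _
    have h0 := Int.emod_nonneg n (by omega : (k : ℤ) ≠ 0)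
    have hlt := Int.emod_lt_of_pos n (by omega : (0 : ℤ) < k)
    simp only [Finset.coe_map, Finset.coe_range, mem_image, mem_Iio, Nat.castEmbedding_apply]
    exact ⟨(n % k).toNat, by omega, by omega⟩
  rw [ncard_eq_toFinset_card S hS, Finset.card_eq_sum_card_fiberwise hmaps, Finset.sum_map]
  refine Finset.sum_congr rfl fun i hi => ?_
  rw [ncard_modularPart (by omega) (by simp at hi; omega), ← ncard_coe_finset]
  congr 1
  ext n
  simp

/-- For a Maya diagram `M` and `k ≥ 1`, the `k`-modular decomposition
`M^{(i)} = {m : km + i ∈ M}` consists of Maya diagrams, and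
`card((M+k) ⊖ M) = Σ_i card((M^{(i)}+1) ⊖ M^{(i)})`.  In particular `M` is `(p,k)`-cyclic
with `p = Σ_i (2g_i+1)`: flipping `M` at every element of `(M+k) ⊖ M` (i.e. taking the
symmetric difference with it) transforms `M` into `M+k`, and that set has cardinality `p`. -/
theorem maya_modular_decomposition (M : Set ℤ)
    (h1 : {m ∈ M | 0 ≤ m}.Finite)
    (h2 : {m : ℤ | m < 0 ∧ m ∉ M}.Finite)
    (k : ℕ) (hk : 1 ≤ k) :
    (∀ i < k,
      {m ∈ {x : ℤ | (k : ℤ) * x + (i : ℤ) ∈ M} | 0 ≤ m}.Finite ∧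
      {m : ℤ | m < 0 ∧ m ∉ {x : ℤ | (k : ℤ) * x + (i : ℤ) ∈ M}}.Finite) ∧
    (symmDiff ((fun x => x + (k : ℤ)) '' M) M).Finite ∧
    (symmDiff ((fun x => x + (k : ℤ)) '' M) M).ncard =
      ∑ i ∈ Finset.range k,
        (symmDiff ((fun x => x + 1) '' {x : ℤ | (k : ℤ) * x + (i : ℤ) ∈ M})
          {x : ℤ | (k : ℤ) * x + (i : ℤ) ∈ M}).ncard ∧
    symmDiff M (symmDiff ((fun x => x + (k : ℤ)) '' M) M) = (fun x => x + (k : ℤ)) '' M := by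
  have hM : IsMaya M := isMaya_iff.2 ⟨h1, h2⟩
  have hD := hM.finite_symmDiff_image_add k
  refine ⟨fun i hi => isMaya_iff.1 (isMaya_modularPart hM (Int.natCast_nonneg i) (by omega)),
    hD, ?_, ?_⟩
  · rw [ncard_eq_sum_ncard_modularPart hk hD]
    exact Finset.sum_congr rfl fun i _ => by rw [← symmDiff_image_add_one_modularPart]; rfl
  · rw [symmDiff_comm _ M, symmDiff_symmDiff_cancel_left]
end

section
/- Let M be a Maya diagram and let k ≥ 1 be an integer. Then for every j ∈ {0, 1, …, k−1}, the set {m ∈ (M+k) ⊖ M : m ≡ j (mod k)} is finite of odd cardinality. That is, the k-th order flip set (M+k) ⊖ M of any Maya diagram is an oddly k-coloured set: each residue class mod k contains an odd number of its elements. -/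
/-!
Restricting `M` to the residue class `j` mod `k` via `n ↦ n * k + j` gives a set `N` that again
contains all sufficiently negative and no sufficiently positive integers, and the residue-`j` part
of `(M + k) ⊖ M` is the image of the first-order flip set `(N + 1) ⊖ N`. That set consists of the
points where the indicator of `N` changes value; since the indicator goes from `1` far to the left
to `0` far to the right, it changes value an odd number of times.
-/

open Filter Finset

def flipSet (M : Set ℤ) (k : ℤ) : Set ℤ := symmDiff ((· + k) '' M) M

lemma mem_flipSet {M : Set ℤ} {k m : ℤ} : m ∈ flipSet M k ↔ ¬(m - k ∈ M ↔ m ∈ M) := by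
  rw [flipSet, Set.mem_symmDiff, Set.image_add_right, Set.mem_preimage, ← sub_eq_add_neg]
  tauto

lemma preimage_flipSet_mul_add (M : Set ℤ) (j k : ℤ) :
    (fun n => n * k + j) ⁻¹' flipSet M k = flipSet ((fun n => n * k + j) ⁻¹' M) 1 := by
  ext n
  simp only [Set.mem_preimage, mem_flipSet, sub_one_mul, sub_add_eq_add_sub]

lemma Int.setOf_emod_eq_eq_range {j k : ℤ} (hj : 0 ≤ j) (hjk : j < k) :
    {m : ℤ | m % k = j} = Set.range (fun n => n * k + j) := by
  ext m
  constructor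
  · rintro (hm : m % k = j)
    exact ⟨m / k, by linarith [Int.emod_add_mul_ediv m k, mul_comm k (m / k)]⟩
  · rintro ⟨n, rfl⟩
    simp [Int.emod_eq_of_lt hj hjk]

lemma eventually_atBot_mem_of_finite {M : Set ℤ} (h : {m : ℤ | m < 0 ∧ m ∉ M}.Finite) :
    ∀ᶠ m in atBot, m ∈ M := by
  filter_upwards [h.eventually_cofinite_notMem.filter_mono atBot_le_cofinite,
    eventually_lt_atBot 0] with m hm hm0
  by_contra hmM
  exact hm ⟨hm0, hmM⟩

lemma eventually_atTop_notMem_of_finite {M : Set ℤ} (h : {m ∈ M | 0 ≤ m}.Finite) :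
    ∀ᶠ m in atTop, m ∉ M := by
  filter_upwards [h.eventually_cofinite_notMem.filter_mono atTop_le_cofinite,
    eventually_ge_atTop 0] with m hm hm0 hmM
  exact hm ⟨hmM, hm0⟩

lemma Int.odd_card_Ioc_filter_changes_iff {p : ℤ → Prop} [DecidablePred p] {a b : ℤ}
    (hab : a ≤ b) : Odd #{n ∈ Ioc a b | ¬(p (n - 1) ↔ p n)} ↔ ¬(p a ↔ p b) := by
  induction b, hab using Int.leInduction with
  | base => simp
  | succ b hab ih =>
    have hIoc : Ioc a (b + 1) = insert (b + 1) (Ioc a b) := by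
      ext x; simp only [mem_Ioc, mem_insert]; omega
    rw [hIoc, filter_insert, add_sub_cancel_right]
    split_ifs with hsame
    · rw [ih]
      tauto
    · rw [card_insert_of_notMem (by simp), Nat.odd_add_one, ih]
      tauto

lemma flipSet_one_finite_and_odd_ncard {N : Set ℤ} (hbot : ∀ᶠ n in atBot, n ∈ N)
    (htop : ∀ᶠ n in atTop, n ∉ N) : (flipSet N 1).Finite ∧ Odd (flipSet N 1).ncard := by
  classical
  obtain ⟨a, ha⟩ := eventually_atBot.1 hbot
  obtain ⟨b, hb⟩ := eventually_atTop.1 htop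
  have hflip : flipSet N 1 = ↑{n ∈ Ioc a (max a b) | ¬(n - 1 ∈ N ↔ n ∈ N)} := by
    ext n
    simp only [mem_flipSet, coe_filter, mem_Ioc, Set.mem_ofPred_eq, iff_and_self]
    intro hchange
    by_contra hout
    rcases not_and_or.1 hout with hle | hgt
    · exact hchange (iff_of_true (ha _ (by omega)) (ha _ (by omega)))
    · exact hchange (iff_of_false (hb _ (by omega)) (hb _ (by omega)))
  rw [hflip, Set.ncard_coe_finset]
  refine ⟨finite_toSet _, (Int.odd_card_Ioc_filter_changes_iff (le_max_left a b)).2 ?_⟩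
  simp [ha a le_rfl, hb (max a b) (le_max_right a b)]

theorem maya_flip_set_oddly_coloured_general (M : Set ℤ)
    (h1 : {m ∈ M | 0 ≤ m}.Finite)
    (h2 : {m : ℤ | m < 0 ∧ m ∉ M}.Finite)
    (k : ℕ) :
    ∀ j < k,
      {m ∈ symmDiff ((fun x => x + (k : ℤ)) '' M) M | m % (k : ℤ) = (j : ℤ)}.Finite ∧
      Odd {m ∈ symmDiff ((fun x => x + (k : ℤ)) '' M) M | m % (k : ℤ) = (j : ℤ)}.ncard := by
  intro j hj
  have hjk : (j : ℤ) < k := by exact_mod_cast hj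
  have hk : (0 : ℤ) < k := by omega
  set e : ℤ → ℤ := fun n => n * k + j
  have he : e.Injective := fun x y hxy => mul_right_cancel₀ hk.ne' (add_right_cancel hxy)
  have hclass : {m ∈ symmDiff ((fun x => x + (k : ℤ)) '' M) M | m % (k : ℤ) = (j : ℤ)} =
      e '' flipSet (e ⁻¹' M) 1 := by
    rw [← preimage_flipSet_mul_add, Set.image_preimage_eq_inter_range,
      ← Int.setOf_emod_eq_eq_range (Int.natCast_nonneg j) hjk]
    rfl
  obtain ⟨hfin, hodd⟩ := flipSet_one_finite_and_odd_ncard (N := e ⁻¹' M)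
    ((tendsto_atBot_add_const_right _ _ (tendsto_id.atBot_mul_const' hk)).eventually
      (eventually_atBot_mem_of_finite h2))
    ((tendsto_atTop_add_const_right _ _ (tendsto_id.atTop_mul_const' hk)).eventually
      (eventually_atTop_notMem_of_finite h1))
  rw [hclass, Set.ncard_image_of_injective _ he]
  exact ⟨hfin.image e, hodd⟩

/-- For a Maya diagram `M` and `k ≥ 1`, the `k`-th order flip set
`(M+k) ⊖ M` is an oddly `k`-coloured set: each residue class mod `k` contains a finite,
odd number of its elements. -/
theorem maya_flip_set_oddly_coloured (M : Set ℤ)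
    (h1 : {m ∈ M | 0 ≤ m}.Finite)
    (h2 : {m : ℤ | m < 0 ∧ m ∉ M}.Finite)
    (k : ℕ) (hk : 1 ≤ k) :
    ∀ j < k,
      {m ∈ symmDiff ((fun x => x + (k : ℤ)) '' M) M | m % (k : ℤ) = (j : ℤ)}.Finite ∧
      Odd {m ∈ symmDiff ((fun x => x + (k : ℤ)) '' M) M | m % (k : ℤ) = (j : ℤ)}.ncard :=
  maya_flip_set_oddly_coloured_general M h1 h2 k
end

section
/- For every Maya diagram M and every integer k ≥ 1, the symmetric difference (M+k) ⊖ M is finite, its cardinality is at least k, and its cardinality is congruent to k modulo 2. Consequently, a Maya diagram can be transformed into its translate M+k by an odd number p of flips only if k is odd (when p and the number of flips have matching parity), and p ≥ k. -/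
/-!
Measure a Maya diagram against another one by the relative charge
`|A \ B| - |B \ A|`. It is additive along chains of sets with finite symmetric differences,
since it equals `|A ∩ U| - |B ∩ U|` for any finite window `U` containing all the differences.
A flip changes the charge by `±1`, so `p` flips change it by `a - b` with `a + b = p`;
translating by `k` changes it by exactly `k`, as one sees by comparing `M + k` with `Iio k` and
`M` with `Iio 0`. Hence `p ≥ k` and `p ≡ k (mod 2)`, and the same bound applies to
`|(M + k) ⊖ M| = |(M + k) \ M| + |M \ (M + k)|`.
-/

open Set
open scoped symmDiff

section RelCharge

variable {α β : Type*}

/-- The charge of `A` relative to `B`; for a Maya diagram `M`, `relCharge M (Iio 0)` is the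
usual charge (occupied sites `≥ 0` minus holes `< 0`). -/
noncomputable def relCharge (A B : Set α) : ℤ := (A \ B).ncard - (B \ A).ncard

lemma relCharge_self (A : Set α) : relCharge A A = 0 := by simp [relCharge]

lemma relCharge_swap (A B : Set α) : relCharge B A = -relCharge A B := by
  unfold relCharge; ring

lemma relCharge_eq_ncard_inter_sub {A B U : Set α} (hU : U.Finite) (h : A ∆ B ⊆ U) :
    relCharge A B = (A ∩ U).ncard - (B ∩ U).ncard := by
  have restrict : ∀ {X Y : Set α}, X \ Y ⊆ U → X \ Y = (X ∩ U) \ (Y ∩ U) := fun hXY => by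
    ext x
    have := @hXY x
    simp only [mem_sdiff, mem_inter_iff] at this ⊢
    tauto
  rw [Set.symmDiff_def, union_subset_iff] at h
  have hA := ncard_inter_add_ncard_sdiff_eq_ncard (A ∩ U) (B ∩ U) (hU.inter_of_right _)
  have hB := ncard_inter_add_ncard_sdiff_eq_ncard (B ∩ U) (A ∩ U) (hU.inter_of_right _)
  rw [inter_comm (B ∩ U)] at hB
  unfold relCharge
  rw [restrict h.1, restrict h.2]
  omega

lemma relCharge_add_relCharge {A B C : Set α} (hAB : (A ∆ B).Finite) (hBC : (B ∆ C).Finite) :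
    relCharge A B + relCharge B C = relCharge A C := by
  have hU := hAB.union hBC
  rw [relCharge_eq_ncard_inter_sub hU subset_union_left,
    relCharge_eq_ncard_inter_sub hU subset_union_right,
    relCharge_eq_ncard_inter_sub hU (symmDiff_triangle A B C)]
  ring

lemma Set.Finite.symmDiff_trans {A B C : Set α} (hAB : (A ∆ B).Finite) (hBC : (B ∆ C).Finite) :
    (A ∆ C).Finite :=
  (hAB.union hBC).subset (symmDiff_triangle A B C)

lemma Set.ncard_symmDiff {A B : Set α} (h : (A ∆ B).Finite) :
    (A ∆ B).ncard = (A \ B).ncard + (B \ A).ncard := by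
  rw [symmDiff_def] at h ⊢
  exact ncard_union_eq disjoint_sdiff_sdiff (h.subset subset_union_left)
    (h.subset subset_union_right)

lemma relCharge_image {f : α → β} (hf : f.Injective) (A B : Set α) :
    relCharge (f '' A) (f '' B) = relCharge A B := by
  simp only [relCharge, ← image_sdiff hf, ncard_image_of_injective _ hf]

lemma relCharge_symmDiff_singleton_of_mem {A : Set α} {x : α} (hx : x ∈ A) :
    relCharge (A ∆ {x}) A = -1 := by
  rw [relCharge_eq_ncard_inter_sub (finite_singleton x) (symmDiff_symmDiff_self' A {x}).le]
  simp [hx, mem_symmDiff]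

lemma relCharge_symmDiff_singleton_of_notMem {A : Set α} {x : α} (hx : x ∉ A) :
    relCharge (A ∆ {x}) A = 1 := by
  rw [relCharge_eq_ncard_inter_sub (finite_singleton x) (symmDiff_symmDiff_self' A {x}).le]
  simp [hx, mem_symmDiff]

lemma exists_relCharge_foldl_symmDiff_singleton (μ : List α) (A : Set α) :
    (μ.foldl (fun S x => S ∆ {x}) A ∆ A).Finite ∧
    ∃ a b : ℕ, a + b = μ.length ∧ relCharge (μ.foldl (fun S x => S ∆ {x}) A) A = a - b := by
  induction μ generalizing A with
  | nil => exact ⟨by simp, 0, 0, rfl, by simp [relCharge_self]⟩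
  | cons x μ ih =>
    obtain ⟨hfin, a, b, hab, hcharge⟩ := ih (A ∆ {x})
    have hflip : ((A ∆ {x}) ∆ A).Finite := by
      rw [symmDiff_symmDiff_self']; exact finite_singleton x
    rw [List.foldl_cons]
    refine ⟨hfin.symmDiff_trans hflip, ?_⟩
    rw [← relCharge_add_relCharge hfin hflip, hcharge]
    by_cases hx : x ∈ A
    · rw [relCharge_symmDiff_singleton_of_mem hx]
      exact ⟨a, b + 1, by simp; omega, by push_cast; ring⟩
    · rw [relCharge_symmDiff_singleton_of_notMem hx]
      exact ⟨a + 1, b, by simp; omega, by push_cast; ring⟩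

end RelCharge

lemma Set.finite_symmDiff_Iio_Iio {γ : Type*} [LinearOrder γ] [LocallyFiniteOrder γ] (a b : γ) :
    (Iio a ∆ Iio b).Finite := by
  rw [symmDiff_def, Iio_sdiff_Iio, Iio_sdiff_Iio]
  exact (finite_Ico b a).union (finite_Ico a b)

lemma relCharge_Iio_Iio (a b : ℤ) : relCharge (Iio a) (Iio b) = a - b := by
  simp only [relCharge, Iio_sdiff_Iio, ← Finset.coe_Ico, ncard_coe_finset, Int.card_Ico]
  omega

lemma finite_symmDiff_Iio_zero {M : Set ℤ} (h1 : {m ∈ M | 0 ≤ m}.Finite)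
    (h2 : {m : ℤ | m < 0 ∧ m ∉ M}.Finite) : (M ∆ Iio 0).Finite := by
  refine (h1.union h2).subset fun m hm => ?_
  simp only [mem_symmDiff, mem_Iio, not_lt] at hm
  exact hm

lemma relCharge_image_add_const {M : Set ℤ} (hM : (M ∆ Iio 0).Finite) (k : ℤ) :
    (((· + k) '' M) ∆ M).Finite ∧ relCharge ((· + k) '' M) M = k := by
  have hIio : (· + k) '' Iio 0 = Iio k := by simp
  have hshift : (((· + k) '' M) ∆ Iio k).Finite := by
    rw [← hIio, ← image_symmDiff (add_left_injective k)]
    exact hM.image _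
  have hM' : (Iio 0 ∆ M).Finite := symmDiff_comm M _ ▸ hM
  have hkM : (Iio k ∆ M).Finite := (finite_symmDiff_Iio_Iio k 0).symmDiff_trans hM'
  refine ⟨hshift.symmDiff_trans hkM, ?_⟩
  calc relCharge ((· + k) '' M) M
      = relCharge ((· + k) '' M) (Iio k) + relCharge (Iio k) (Iio 0) + relCharge (Iio 0) M := by
        rw [add_assoc, relCharge_add_relCharge (finite_symmDiff_Iio_Iio k 0) hM',
          relCharge_add_relCharge hshift hkM]
    _ = relCharge M (Iio 0) + k - relCharge M (Iio 0) := by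
        rw [relCharge_Iio_Iio, relCharge_swap M, ← hIio, relCharge_image (add_left_injective k)]
        ring
    _ = k := by ring

theorem maya_flip_parity_general (M : Set ℤ)
    (h1 : {m ∈ M | 0 ≤ m}.Finite)
    (h2 : {m : ℤ | m < 0 ∧ m ∉ M}.Finite)
    (k : ℕ) :
    (symmDiff ((fun x => x + (k : ℤ)) '' M) M).Finite ∧
    k ≤ (symmDiff ((fun x => x + (k : ℤ)) '' M) M).ncard ∧
    (symmDiff ((fun x => x + (k : ℤ)) '' M) M).ncard % 2 = k % 2 ∧
    (∀ μ : List ℤ,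
      μ.foldl (fun S x => symmDiff S ({x} : Set ℤ)) M = (fun x => x + (k : ℤ)) '' M →
      Odd μ.length → Odd k ∧ k ≤ μ.length) := by
  obtain ⟨hfin, hcharge⟩ := relCharge_image_add_const (finite_symmDiff_Iio_zero h1 h2) k
  have hcard := ncard_symmDiff hfin
  refine ⟨hfin, ?_, ?_, fun μ hμ hodd => ?_⟩
  · unfold relCharge at hcharge; omega
  · unfold relCharge at hcharge; omega
  obtain ⟨-, a, b, hab, hflips⟩ := exists_relCharge_foldl_symmDiff_singleton μ M
  rw [hμ, hcharge] at hflips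
  rw [Nat.odd_iff] at hodd ⊢
  omega

/-- For every Maya diagram `M` and `k ≥ 1`, the symmetric difference
`(M+k) ⊖ M` is finite, has cardinality at least `k`, and its cardinality is congruent to
`k` mod 2.  Consequently, `M` can be transformed into `M+k` by an odd number `p` of flips
(flipping at `x` = symmetric difference with `{x}`) only if `k` is odd and `p ≥ k`. -/
theorem maya_flip_parity (M : Set ℤ)
    (h1 : {m ∈ M | 0 ≤ m}.Finite)
    (h2 : {m : ℤ | m < 0 ∧ m ∉ M}.Finite)
    (k : ℕ) (hk : 1 ≤ k) :
    (symmDiff ((fun x => x + (k : ℤ)) '' M) M).Finite ∧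
    k ≤ (symmDiff ((fun x => x + (k : ℤ)) '' M) M).ncard ∧
    (symmDiff ((fun x => x + (k : ℤ)) '' M) M).ncard % 2 = k % 2 ∧
    (∀ μ : List ℤ,
      μ.foldl (fun S x => symmDiff S ({x} : Set ℤ)) M = (fun x => x + (k : ℤ)) '' M →
      Odd μ.length → Odd k ∧ k ≤ μ.length) :=
  maya_flip_parity_general M h1 h2 k
end

section
/- For every natural number n and every odd integer k with 1 ≤ k ≤ 2n+1, there exists a Maya diagram M such that card((M+k) ⊖ M) = 2n+1. That is, for each fixed odd period p = 2n+1, there exist (2n+1)-cyclic Maya diagrams with every odd shift k = 1, 3, …, 2n+1. -/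
/-- For every `n` and every odd `k` with `1 ≤ k ≤ 2n+1` there is a Maya
diagram `M` with `card((M+k) ⊖ M) = 2n+1`: for each fixed odd period `p = 2n+1` there
exist `(2n+1)`-cyclic Maya diagrams with every odd shift `k = 1, 3, …, 2n+1`. -/
theorem maya_cyclic_exists (n k : ℕ) (hodd : Odd k) (h1 : 1 ≤ k) (h2 : k ≤ 2 * n + 1) :
    ∃ M : Set ℤ,
      {m ∈ M | 0 ≤ m}.Finite ∧
      {m : ℤ | m < 0 ∧ m ∉ M}.Finite ∧
      (symmDiff ((fun x => x + (k : ℤ)) '' M) M).ncard = 2 * n + 1 := by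
  obtain ⟨j, hj⟩ := hodd
  set t : ℕ := n - j with ht
  set K : ℤ := (k : ℤ) with hK
  have hK1 : (1 : ℤ) ≤ K := by rw [hK]; exact_mod_cast h1
  have hK0 : K ≠ 0 := by omega
  set f : ℕ → ℤ := fun i => 2 * K * (i + 1) with hf
  set S : Finset ℤ := (Finset.range t).image f with hS
  have hfi : ∀ i : ℕ, 2 * K ≤ f i := by
    intro i
    have h0 : (0 : ℤ) ≤ (i : ℤ) := Int.natCast_nonneg i
    have : f i = 2 * K + 2 * K * i := by rw [hf]; ring
    rw [this]
    nlinarith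
  refine ⟨Set.Iio 0 ∪ ↑S, ?_, ?_, ?_⟩
  · apply Set.Finite.subset S.finite_toSet
    rintro x ⟨hx, hx0⟩
    rcases hx with h | h
    · exact absurd hx0 (not_le.mpr h)
    · exact h
  · have : {m : ℤ | m < 0 ∧ m ∉ (Set.Iio 0 ∪ ↑S)} = ∅ := by
      ext x; simp only [Set.mem_setOf_eq, Set.mem_empty_iff_false, iff_false]
      rintro ⟨hx, hx2⟩
      exact hx2 (Or.inl hx)
    rw [this]; exact Set.finite_empty
  · set g : ℕ → ℤ := fun i => f i + K with hg
    set T : Finset ℤ := Finset.Ico 0 K ∪ (Finset.range t).image f ∪ (Finset.range t).image g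
      with hT
    have hset : symmDiff ((fun x => x + K) '' (Set.Iio 0 ∪ ↑S)) (Set.Iio 0 ∪ ↑S) = ↑T := by
      ext x
      simp only [Set.mem_symmDiff, Set.mem_image, Set.mem_union, Set.mem_Iio, hT, hS,
        Finset.coe_union, Finset.coe_image, Finset.coe_Ico, Set.mem_Ico, Finset.coe_range]
      constructor
      · rintro (⟨⟨y, hy, rfl⟩, hx2⟩ | ⟨hx1, hx2⟩)
        · push_neg at hx2
          rcases hy with hy | ⟨i, hi, rfl⟩
          · left; left; exact ⟨by omega, by omega⟩
          · right; exact ⟨i, hi, rfl⟩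
        · push_neg at hx2
          rcases hx1 with hx1 | ⟨i, hi, rfl⟩
          · exact absurd (by ring : x - K + K = x) (hx2 (x - K) (Or.inl (by omega)))
          · left; right; exact ⟨i, hi, rfl⟩
      · rintro ((⟨hx0, hxK⟩ | ⟨i, hi, rfl⟩) | ⟨i, hi, rfl⟩)
        · left
          refine ⟨⟨x - K, Or.inl (by omega), by ring⟩, ?_⟩
          rintro (h | ⟨i, hi, hfix⟩)
          · omega
          · have := hfi i; omega
        · right
          refine ⟨Or.inr ⟨i, hi, rfl⟩, ?_⟩
          rintro ⟨y, hy, hyx⟩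
          rcases hy with hy | ⟨i', hi', rfl⟩
          · have := hfi i; omega
          · have h' : K * (2 * (i' : ℤ) + 3) = K * (2 * (i : ℤ) + 2) := by
              have h2 : 2*K*((i':ℤ)+1) + K = 2*K*((i:ℤ)+1) := hyx
              linear_combination h2
            have := mul_left_cancel₀ hK0 h'
            omega
        · left
          refine ⟨⟨f i, Or.inr ⟨i, hi, rfl⟩, rfl⟩, ?_⟩
          rintro (h | ⟨i', hi', hfix⟩)
          · have := hfi i; simp only [hg] at h; omega
          · have h' : K * (2 * (i' : ℤ) + 2) = K * (2 * (i : ℤ) + 3) := by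
              have h2 : 2*K*((i':ℤ)+1) = 2*K*((i:ℤ)+1) + K := hfix
              linear_combination h2
            have := mul_left_cancel₀ hK0 h'
            omega
    rw [hset, Set.ncard_coe_finset]
    have hfinj : Function.Injective f := by
      intro a b hab
      have h' : K * (2 * (a : ℤ) + 2) = K * (2 * (b : ℤ) + 2) := by
        have h2 : 2*K*((a:ℤ)+1) = 2*K*((b:ℤ)+1) := hab
        linear_combination h2
      have := mul_left_cancel₀ hK0 h'
      omega
    have hginj : Function.Injective g := by
      intro a b hab
      simp only [hg] at hab
      exact hfinj (by linarith)
    have hd1 : Disjoint (Finset.Ico 0 K) ((Finset.range t).image f) := by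
      simp only [Finset.disjoint_left, Finset.mem_Ico, Finset.mem_image, Finset.mem_range]
      rintro x ⟨h0, hx⟩ ⟨i, hi, rfl⟩
      have := hfi i; omega
    have hd2 : Disjoint (Finset.Ico 0 K ∪ (Finset.range t).image f)
        ((Finset.range t).image g) := by
      simp only [Finset.disjoint_left, Finset.mem_union, Finset.mem_Ico, Finset.mem_image,
        Finset.mem_range]
      rintro x (⟨h0, hx⟩ | ⟨i, hi, rfl⟩) ⟨i', hi', hgi⟩
      · have := hfi i'; simp only [hg] at hgi; omega
      · have h' : K * (2 * (i' : ℤ) + 3) = K * (2 * (i : ℤ) + 2) := by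
          have h2 : 2*K*((i':ℤ)+1) + K = 2*K*((i:ℤ)+1) := hgi
          linear_combination h2
        have := mul_left_cancel₀ hK0 h'
        omega
    rw [hT, Finset.card_union_of_disjoint hd2, Finset.card_union_of_disjoint hd1,
      Finset.card_image_of_injective _ hfinj, Finset.card_image_of_injective _ hginj,
      Finset.card_range, Int.card_Ico]
    simp only [hK, ht]
    omega
end

section
/- Fix n ≥ 0 and k ≥ 1, and set p := 2n+1. On pairs (ν, C) ∈ ℤ^p × (ℤ/kℤ)^p define the maps: π(ν,C) := ((ν_1, ν_2, …, ν_{p−1}, ν_0 + 1), (C_1, …, C_{p−1}, C_0)); for 0 ≤ i ≤ 2n−1, s_i(ν,C) := the pair obtained by swapping entries in positions i and i+1 in both ν and C; and s_{2n}(ν,C) := ((ν_{2n} − 1, ν_1, …, ν_{2n−1}, ν_0 + 1), C with entries in positions 0 and 2n swapped). Then for each i = 0,…,2n, the composition E_i := s_i ∘ s_{i+1} ∘ ⋯ ∘ s_{i+2n−1} ∘ π (subscripts of the s's taken mod 2n+1) satisfies E_i(ν,C) = (ν + e_i, C) for all (ν,C), where e_i ∈ ℤ^p is the i-th standard unit vector.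 -/
/-- The rotation generator `π` of the extended affine Weyl group acting on `k`-coloured
integer sequences of length `p = 2n+1`:
`π(ν,C) = ((ν_1, …, ν_{p−1}, ν_0 + 1), (C_1, …, C_{p−1}, C_0))`. -/
def piMap (n k : ℕ) :
    (Fin (2 * n + 1) → ℤ) × (Fin (2 * n + 1) → ZMod k) →
      (Fin (2 * n + 1) → ℤ) × (Fin (2 * n + 1) → ZMod k) :=
  fun x =>
    (fun j => x.1 (j + 1) + if j = Fin.last (2 * n) then 1 else 0,
     fun j => x.2 (j + 1))

/-- The reflection generators `s_i`: for `0 ≤ i ≤ 2n−1`, `s_i` swaps the entries in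
positions `i` and `i+1` in both `ν` and `C`; the affine reflection `s_{2n}` sends
`(ν,C)` to `((ν_{2n} − 1, ν_1, …, ν_{2n−1}, ν_0 + 1), C` with positions `0` and `2n`
swapped`)`. -/
def sMap (n k : ℕ) (i : Fin (2 * n + 1)) :
    (Fin (2 * n + 1) → ℤ) × (Fin (2 * n + 1) → ZMod k) →
      (Fin (2 * n + 1) → ℤ) × (Fin (2 * n + 1) → ZMod k) :=
  fun x =>
    if (i : ℕ) = 2 * n then
      (fun j =>
        if j = (0 : Fin (2 * n + 1)) then x.1 (Fin.last (2 * n)) - 1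
        else if j = Fin.last (2 * n) then x.1 0 + 1
        else x.1 j,
       fun j => x.2 (Equiv.swap (0 : Fin (2 * n + 1)) (Fin.last (2 * n)) j))
    else
      (fun j => x.1 (Equiv.swap i (i + 1) j),
       fun j => x.2 (Equiv.swap i (i + 1) j))

/-- The translation operators `E_i := s_i ∘ s_{i+1} ∘ ⋯ ∘ s_{i+2n−1} ∘ π`
(subscripts mod `2n+1`). -/
def EMap (n k : ℕ) (i : Fin (2 * n + 1)) :
    (Fin (2 * n + 1) → ℤ) × (Fin (2 * n + 1) → ZMod k) →
      (Fin (2 * n + 1) → ℤ) × (Fin (2 * n + 1) → ZMod k) :=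
  (List.range (2 * n)).foldr
    (fun t acc => sMap n k (i + Fin.ofNat (2 * n + 1) t) ∘ acc) (piMap n k)

/-!
Every generator acts as `(ν, C) ↦ (ν ∘ σ + δ, C ∘ σ)` for a permutation `σ` and a shift `δ`, and
such maps compose like a semidirect product. Peeling off one reflection at a time,
`s_{i+m} ∘ ⋯ ∘ s_{i+2n−1} ∘ π` has permutation part the cycle `(i i+1 … i+m)` (indices mod `2n+1`)
and shift `e_{min(i+m, 2n)}`: the `+1` of `π` sits at position `2n`, the affine reflection `s_{2n}`
keeps it there, and each ordinary `s_j` moves it one step to the left. At `m = 0` the cycle is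
trivial and the shift is `e_i`.
-/

open Equiv Fin.NatCast

section AffineAction

variable {ι A B : Type*} [AddSemigroup A]

def affineAct (σ : Perm ι) (δ : ι → A) (x : (ι → A) × (ι → B)) : (ι → A) × (ι → B) :=
  (x.1 ∘ σ + δ, x.2 ∘ σ)

theorem affineAct_comp_affineAct (σ τ : Perm ι) (δ ε : ι → A) :
    affineAct (B := B) σ δ ∘ affineAct τ ε = affineAct (τ * σ) (ε ∘ σ + δ) := by
  funext x
  ext j <;> simp [affineAct, add_assoc]

end AffineAction

namespace Fin

variable {N : ℕ} [NeZero N]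

theorem val_add_natCast (i : Fin N) {m : ℕ} (hm : m < N) :
    ((i + m : Fin N) : ℕ) = if N ≤ (i : ℕ) + m then (i : ℕ) + m - N else (i : ℕ) + m := by
  rw [val_add_eq_ite, val_natCast, Nat.mod_eq_of_lt hm]

theorem cycleRange_succ_mul_swap {j : Fin N} (hj : (j : ℕ) + 1 < N) :
    cycleRange (j + 1) * swap j (j + 1) = cycleRange j := by
  have hval : ((j + 1 : Fin N) : ℕ) = j + 1 := val_add_one_of_lt' hj
  ext x
  simp only [Perm.mul_apply, cycleRange_apply, swap_apply_def, lt_def, Fin.ext_iff, hval,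
    apply_ite Fin.val]
  split_ifs <;> omega

def cycleRangeFrom (i j : Fin N) : Perm (Fin N) :=
  Equiv.addLeft i * cycleRange j * (Equiv.addLeft i)⁻¹

theorem cycleRangeFrom_zero (i : Fin N) : cycleRangeFrom i 0 = 1 := by
  rw [cycleRangeFrom, cycleRange_zero, mul_one, mul_inv_cancel]

theorem cycleRangeFrom_last {n : ℕ} (i : Fin (n + 1)) :
    cycleRangeFrom i (last n) = finRotate (n + 1) := by
  ext x
  simp [cycleRangeFrom, finRotate_apply, ← add_assoc]

theorem cycleRangeFrom_succ_mul_swap (i : Fin N) {j : Fin N} (hj : (j : ℕ) + 1 < N) :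
    cycleRangeFrom i (j + 1) * swap (i + j) (i + j + 1) = cycleRangeFrom i j := by
  have hswap : swap (i + j) (i + j + 1) =
      Equiv.addLeft i * swap j (j + 1) * (Equiv.addLeft i)⁻¹ := by
    rw [← swap_apply_apply, Equiv.coe_addLeft, add_assoc]
  rw [hswap, cycleRangeFrom, cycleRangeFrom, ← cycleRange_succ_mul_swap hj]
  group

end Fin
section Generators

variable {n : ℕ} (k : ℕ)

theorem piMap_eq_affineAct :
    piMap n k = affineAct (finRotate (2 * n + 1)) (Pi.single (Fin.last (2 * n)) 1) := by
  funext x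
  simp only [piMap, affineAct]
  congr 1 <;> funext j <;> simp [finRotate_apply, Pi.single_apply]

theorem sMap_eq_affineAct_of_ne_last {i : Fin (2 * n + 1)} (hi : i ≠ Fin.last (2 * n)) :
    sMap n k i = affineAct (swap i (i + 1)) 0 := by
  have : (i : ℕ) ≠ 2 * n := fun h => hi (Fin.ext h)
  funext x
  simp only [sMap, if_neg this, affineAct, add_zero]
  rfl

-- For `n = 0` the positions `0` and `2n` coincide, and `sMap` subtracts `1` there.
theorem sMap_last_eq_affineAct (hn : n ≠ 0) :
    sMap n k (Fin.last (2 * n)) = affineAct (swap (Fin.last (2 * n)) 0)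
      (Pi.single (Fin.last (2 * n)) 1 - Pi.single 0 1) := by
  have hne : (0 : Fin (2 * n + 1)) ≠ Fin.last (2 * n) := by
    rw [ne_eq, Fin.ext_iff, Fin.val_zero, Fin.val_last]; omega
  funext x
  simp only [sMap, Fin.val_last, if_true, affineAct, swap_comm (Fin.last (2 * n))]
  congr 1
  funext j
  by_cases h0 : j = 0
  · subst h0; simp [hne, sub_eq_add_neg]
  by_cases hl : j = Fin.last (2 * n)
  · subst hl; simp [hne.symm]
  · simp [h0, hl, swap_apply_of_ne_of_ne h0 hl]

end Generators

section PartialComposition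

variable {n : ℕ}

def partialShiftIndex (i : Fin (2 * n + 1)) (m : ℕ) : Fin (2 * n + 1) :=
  ⟨min (i + m) (2 * n), by omega⟩

theorem val_partialShiftIndex (i : Fin (2 * n + 1)) (m : ℕ) :
    (partialShiftIndex i m : ℕ) = min ((i : ℕ) + m) (2 * n) :=
  rfl

theorem partialShiftIndex_of_le {i : Fin (2 * n + 1)} {m : ℕ} (h : (i : ℕ) + m ≤ 2 * n) :
    partialShiftIndex i m = i + m := by
  rw [Fin.ext_iff, val_partialShiftIndex, Fin.val_add_natCast i (by omega)]
  split_ifs <;> omega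

theorem partialShiftIndex_of_ge {i : Fin (2 * n + 1)} {m : ℕ} (h : 2 * n ≤ (i : ℕ) + m) :
    partialShiftIndex i m = Fin.last (2 * n) := by
  rw [Fin.ext_iff, val_partialShiftIndex, Fin.val_last]
  omega

theorem swap_partialShiftIndex_succ {i : Fin (2 * n + 1)} {m : ℕ} (hm : m < 2 * n)
    (hlast : i + (m : Fin (2 * n + 1)) ≠ Fin.last (2 * n)) :
    swap (i + ↑m) (i + ↑m + 1) (partialShiftIndex i (m + 1)) = partialShiftIndex i m := by
  have hsucc : i + (m : Fin (2 * n + 1)) + 1 = i + ↑(m + 1) := by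
    rw [Nat.cast_succ, add_assoc]
  by_cases hwrap : (i : ℕ) + m < 2 * n
  · rw [partialShiftIndex_of_le (by omega), partialShiftIndex_of_le (by omega), ← hsucc,
      swap_apply_right]
  · have hne : Fin.last (2 * n) ≠ i + ↑m + 1 := by
      rw [hsucc, ne_eq, Fin.ext_iff, Fin.val_add_natCast i (by omega), Fin.val_last]
      split_ifs <;> omega
    rw [partialShiftIndex_of_ge (by omega), partialShiftIndex_of_ge (by omega),
      swap_apply_of_ne_of_ne hlast.symm hne]

variable (k : ℕ)

theorem sMap_comp_affineAct_cycleRangeFrom (i : Fin (2 * n + 1)) {m : ℕ} (hm : m < 2 * n) :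
    sMap n k (i + m) ∘
        affineAct (Fin.cycleRangeFrom i ↑(m + 1)) (Pi.single (partialShiftIndex i (m + 1)) 1) =
      affineAct (Fin.cycleRangeFrom i m) (Pi.single (partialShiftIndex i m) 1) := by
  have hperm : Fin.cycleRangeFrom i ↑(m + 1) * swap (i + ↑m) (i + ↑m + 1) =
      Fin.cycleRangeFrom i m := by
    rw [Nat.cast_succ]
    exact Fin.cycleRangeFrom_succ_mul_swap i (by rw [Fin.val_natCast, Nat.mod_eq_of_lt] <;> omega)
  by_cases hlast : i + (m : Fin (2 * n + 1)) = Fin.last (2 * n)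
  · have him : (i : ℕ) + m = 2 * n := by
      have hval := Fin.val_add_natCast i (show m < 2 * n + 1 by omega)
      rw [hlast, Fin.val_last] at hval
      split_ifs at hval <;> omega
    have hswap : swap (Fin.last (2 * n)) 0 = swap (i + ↑m) (i + ↑m + 1) := by
      rw [hlast, Fin.last_add_one]
    rw [hlast, sMap_last_eq_affineAct k (by omega), affineAct_comp_affineAct, hswap, hperm,
      partialShiftIndex_of_ge (by omega), partialShiftIndex_of_ge (by omega),
      Pi.single_comp_equiv, symm_swap, ← hlast, swap_apply_left, hlast, Fin.last_add_one,
      add_sub_cancel]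
  · rw [sMap_eq_affineAct_of_ne_last k hlast, affineAct_comp_affineAct, hperm, add_zero,
      Pi.single_comp_equiv, symm_swap, swap_partialShiftIndex_succ hm hlast]

theorem foldr_sMap_piMap (i : Fin (2 * n + 1)) {m d : ℕ} (h : m + d = 2 * n) :
    (List.range' m d).foldr (fun t acc => sMap n k (i + Fin.ofNat (2 * n + 1) t) ∘ acc)
        (piMap n k) =
      affineAct (Fin.cycleRangeFrom i m) (Pi.single (partialShiftIndex i m) 1) := by
  induction d generalizing m with
  | zero =>
    obtain rfl : m = 2 * n := by omega
    rw [List.range'_zero, List.foldr_nil, piMap_eq_affineAct, Fin.natCast_eq_last,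
      Fin.cycleRangeFrom_last, partialShiftIndex_of_ge (by omega)]
  | succ d ih =>
    rw [List.range'_succ, List.foldr_cons, ih (by omega), Fin.ofNat_eq_cast,
      sMap_comp_affineAct_cycleRangeFrom k i (by omega)]

end PartialComposition

/-- For each `i = 0, …, 2n`, the composition
`E_i = s_i ∘ s_{i+1} ∘ ⋯ ∘ s_{i+2n−1} ∘ π` acts on coloured sequences by
`E_i(ν,C) = (ν + e_i, C)`, where `e_i` is the `i`-th standard unit vector. -/
theorem EMap_eq_translation (n k : ℕ) :
    ∀ (i : Fin (2 * n + 1)) (ν : Fin (2 * n + 1) → ℤ) (C : Fin (2 * n + 1) → ZMod k),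
      EMap n k i (ν, C) = (fun j => ν j + if j = i then 1 else 0, C) := by
  intro i ν C
  have hE : EMap n k i = affineAct 1 (Pi.single i 1) := by
    rw [EMap, List.range_eq_range', foldr_sMap_piMap k i (zero_add _), Nat.cast_zero,
      Fin.cycleRangeFrom_zero, partialShiftIndex_of_le (by omega), Nat.cast_zero, add_zero]
  rw [hE]
  ext j <;> simp [affineAct, Pi.single_apply]
end

section
/- Let n ≥ 0 and k ≥ 1, and let 2n+1 = p_0 + p_1 + ⋯ + p_{k−1} be a composition of 2n+1 into k positive odd parts. For j = 1,…,k set q_j := p_0 + ⋯ + p_{j−1} and let Q := {q_1, …, q_k} ⊆ {1, …, 2n+1}. Define, for i = 0,…,2n: f_i(z) := z/k if i+1 ∈ Q and f_i(z) := 0 otherwise; α_i := 1/k if i+1 ∈ Q and α_i := 0 otherwise. Then (f_0,…,f_{2n} | α_0,…,α_{2n}) is a solution of the A_{2n}-Painlevé system satisfying the normalizations f_0(z) + ⋯ + f_{2n}(z) = z and α_0 + ⋯ + α_{2n} = 1. -/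
/-!
Write `P x` for `x % (2n+1) + 1 ∈ Q`, so that the positions `x` with `P x` are the periodic
extension of the seed indices `i`. Since the parts are odd, the `j`-th seed position (counted
from `0`) has the parity of `j`, i.e. `count P x ≡ x (mod 2)` whenever `P x`; this survives the
periodic extension because the number `k` of seeds per period is odd, like `2n+1`. Hence
`(-1) ^ count P y` changes exactly at the seed positions `y`, and by `2 (-1) ^ y`, so the
alternating sum of seed indicators over `i+1, …, i+2n` telescopes to
`(-1) ^ count P (i+1) - (-1) ^ count P (i+2n+1)`, which vanishes when `i` (and so `i+2n+1`) is a
seed. At a seed the coupling term of the equation therefore vanishes and `f_i' = 1/k = α_i`;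
elsewhere `f_i = 0 = α_i`. Both normalizations just count the `k` seeds.
-/

open Finset

namespace Nat

section Periodic

variable (R : ℕ → Prop) [DecidablePred R] {N : ℕ}

theorem count_comp_mod (hN : 0 < N) (x : ℕ) :
    count (fun y => R (y % N)) x = x / N * count R N + count R (x % N) := by
  have hshift (m r : ℕ) :
      count (fun y => R ((N * m + y) % N)) r = count (fun y => R (y % N)) r := by
    simp only [Nat.mul_add_mod]
  have hbelow {r : ℕ} (hr : r ≤ N) : count (fun y => R (y % N)) r = count R r := by
    simp only [count_eq_card_filter_range]
    congr 1
    exact filter_congr fun y hy => by rw [Nat.mod_eq_of_lt ((mem_range.1 hy).trans_le hr)]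
  have hmul (m : ℕ) : count (fun y => R (y % N)) (N * m) = m * count R N := by
    induction m with
    | zero => simp
    | succ m ih => rw [mul_add_one, count_add, hshift, ih, hbelow le_rfl, add_one_mul]
  conv_lhs => rw [← Nat.div_add_mod x N]
  rw [count_add, hshift, hmul, hbelow (Nat.mod_lt x hN).le]

variable {R}

theorem count_comp_mod_modEq (hN : 0 < N) (hR : ∀ y, R y → count R y ≡ y [MOD 2])
    (hRN : count R N ≡ N [MOD 2]) (x : ℕ) (hx : R (x % N)) :
    count (fun y => R (y % N)) x ≡ x [MOD 2] :=
  calc count (fun y => R (y % N)) x = x / N * count R N + count R (x % N) :=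
        count_comp_mod R hN x
    _ ≡ x / N * N + x % N [MOD 2] := (hRN.mul_left _).add (hR _ hx)
    _ = x := by rw [mul_comm, Nat.div_add_mod]

end Periodic

theorem count_mem_image_of_strictMonoOn {e : ℕ → ℕ} {k j : ℕ}
    (he : StrictMonoOn e (Set.Iio k)) (hj : j < k) :
    count (· ∈ (range k).image e) (e j) = j := by
  have hfilter : {y ∈ range (e j) | y ∈ (range k).image e} = (range j).image e := by
    ext y
    simp only [mem_filter, mem_range, mem_image]
    constructor
    · rintro ⟨hy, b, hb, rfl⟩
      exact ⟨b, (he.lt_iff_lt hb hj).1 hy, rfl⟩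
    · rintro ⟨b, hb, rfl⟩
      exact ⟨he (hb.trans hj) hj hb, b, hb.trans hj, rfl⟩
  rw [count_eq_card_filter_range, hfilter,
    Finset.card_image_of_injOn (he.injOn.mono fun b hb => (mem_range.1 hb).trans hj), card_range]

theorem count_add_one_mem_of_zero_notMem {S : Finset ℕ} (hS : 0 ∉ S) (y : ℕ) :
    count (fun x => x + 1 ∈ S) y = count (· ∈ S) (y + 1) := by
  rw [count_succ', if_neg hS, add_zero]

section Telescoping

variable {P : ℕ → Prop} [DecidablePred P]

theorem neg_one_pow_count_sub_count_succ (hP : ∀ x, P x → count P x ≡ x [MOD 2]) (y : ℕ) :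
    (-1 : ℤ) ^ count P y - (-1) ^ count P (y + 1) = 2 * (-1) ^ y * if P y then 1 else 0 := by
  rw [count_succ]
  split_ifs with hy
  · rw [neg_one_pow_eq_pow_mod_two (n := y), ← hP y hy, ← neg_one_pow_eq_pow_mod_two]
    ring
  · simp

theorem two_mul_neg_one_pow_mul_card_filter_sub (hP : ∀ x, P x → count P x ≡ x [MOD 2])
    (a m : ℕ) :
    2 * (-1) ^ (a + 1) *
        ((#{j ∈ range m | P (a + (2 * j + 1))} : ℤ) - #{j ∈ range m | P (a + (2 * j + 2))}) =
      (-1) ^ count P (a + 1) - (-1) ^ count P (a + (2 * m + 1)) := by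
  induction m with
  | zero => simp
  | succ m ih =>
    have hodd := neg_one_pow_count_sub_count_succ hP (a + (2 * m + 1))
    have heven := neg_one_pow_count_sub_count_succ hP (a + (2 * m + 2))
    have hsign : (-1 : ℤ) ^ (a + (2 * m + 1)) = (-1) ^ (a + 1) := by
      rw [show a + (2 * m + 1) = a + 1 + 2 * m by ring, pow_add, pow_mul]; simp
    rw [hsign] at hodd
    rw [show a + (2 * m + 2) = a + (2 * m + 1) + 1 by ring, pow_succ, hsign] at heven
    simp only [natCast_card_filter, sum_range_succ] at ih ⊢
    rw [show a + (2 * (m + 1) + 1) = a + (2 * m + 1) + 1 + 1 by ring]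
    linear_combination ih - hodd - heven

theorem card_filter_odd_eq_card_filter_even (hP : ∀ x, P x → count P x ≡ x [MOD 2])
    {a n : ℕ} (ha : P a) (ha' : P (a + (2 * n + 1))) :
    #{j ∈ range n | P (a + (2 * j + 1))} = #{j ∈ range n | P (a + (2 * j + 2))} := by
  have hcount : count P (a + 1) ≡ count P (a + (2 * n + 1)) [MOD 2] := by
    rw [count_succ, if_pos ha]
    calc count P a + 1 ≡ a + 1 [MOD 2] := (hP a ha).add_right 1
      _ ≡ a + (2 * n + 1) [MOD 2] := by simp [ModEq, add_mod]
      _ ≡ _ [MOD 2] := (hP _ ha').symm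
  have key := two_mul_neg_one_pow_mul_card_filter_sub hP a n
  rw [neg_one_pow_eq_pow_mod_two (n := count P (a + 1)), hcount, ← neg_one_pow_eq_pow_mod_two,
    sub_self, _root_.mul_eq_zero, sub_eq_zero] at key
  exact_mod_cast key.resolve_left (by simp)

end Telescoping

end Nat

theorem sum_range_modEq_two_of_odd {p : ℕ → ℕ} {m : ℕ} (hodd : ∀ t < m, Odd (p t)) :
    ∑ t ∈ range m, p t ≡ m [MOD 2] := by
  induction m with
  | zero => rfl
  | succ m ih =>
    rw [sum_range_succ]
    exact (ih fun t ht => hodd t (ht.trans m.lt_succ_self)).add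
      (Nat.odd_iff.1 (hodd m m.lt_succ_self))

theorem Fin.sum_ite_eq_count_nsmul {M : Type*} [AddCommMonoid M] (R : ℕ → Prop) [DecidablePred R]
    (N : ℕ) (c : M) : ∑ i : Fin N, (if R i then c else 0) = Nat.count R N • c := by
  rw [Fin.sum_univ_eq_sum_range (fun i => if R i then c else 0), ← sum_filter, Finset.sum_const,
    Nat.count_eq_card_filter_range]

/-- `partialSum p j = p 0 + ⋯ + p j` is the paper's `q_{j+1}`. -/
def partialSum (p : ℕ → ℕ) (j : ℕ) : ℕ := ∑ t ∈ range (j + 1), p t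

section PartialSum

variable {p : ℕ → ℕ} {k : ℕ}

theorem partialSum_strictMonoOn (hpos : ∀ j < k, 0 < p j) :
    StrictMonoOn (partialSum p) (Set.Iio k) :=
  strictMonoOn_of_lt_succ Set.ordConnected_Iio fun j _ _ hj => by
    rw [Order.succ_eq_add_one] at hj ⊢
    simp only [partialSum]
    rw [sum_range_succ _ (j + 1)]
    exact Nat.lt_add_of_pos_right (hpos _ hj)

theorem partialSum_pos (hpos : ∀ j < k, 0 < p j) {j : ℕ} (hj : j < k) : 0 < partialSum p j :=
  (hpos j hj).trans_le (single_le_sum (fun _ _ => Nat.zero_le _) (self_mem_range_succ j))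

theorem zero_notMem_image_partialSum (hpos : ∀ j < k, 0 < p j) :
    0 ∉ (range k).image (partialSum p) := by
  simp only [mem_image, mem_range, not_exists, not_and]
  exact fun j hj => (partialSum_pos hpos hj).ne'

theorem count_add_one_mem_modEq_of_partialSum {Q : Finset ℕ}
    (hQ : Q = (range k).image (partialSum p)) (hodd : ∀ j < k, Odd (p j))
    (hpos : ∀ j < k, 0 < p j) {y : ℕ} (hy : y + 1 ∈ Q) :
    Nat.count (fun x => x + 1 ∈ Q) y ≡ y [MOD 2] := by
  subst hQ
  obtain ⟨j, hj, hjy⟩ := mem_image.1 hy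
  rw [mem_range] at hj
  have hparity : y + 1 ≡ j + 1 [MOD 2] :=
    hjy ▸ sum_range_modEq_two_of_odd fun t ht => hodd t (by omega)
  rw [Nat.count_add_one_mem_of_zero_notMem (zero_notMem_image_partialSum hpos), ← hjy,
    Nat.count_mem_image_of_strictMonoOn (partialSum_strictMonoOn hpos) hj]
  exact (Nat.ModEq.add_right_cancel' 1 hparity).symm

theorem count_add_one_mem_sum_eq_of_partialSum {Q : Finset ℕ}
    (hQ : Q = (range k).image (partialSum p)) (hpos : ∀ j < k, 0 < p j) (hk : 1 ≤ k) :
    Nat.count (fun x => x + 1 ∈ Q) (∑ j ∈ range k, p j) = k := by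
  subst hQ
  obtain ⟨m, rfl⟩ : ∃ m, k = m + 1 := ⟨k - 1, by omega⟩
  rw [Nat.count_add_one_mem_of_zero_notMem (zero_notMem_image_partialSum hpos)]
  change Nat.count _ (partialSum p m + 1) = _
  rw [Nat.count_succ, if_pos (mem_image_of_mem _ (self_mem_range_succ m)),
    Nat.count_mem_image_of_strictMonoOn (partialSum_strictMonoOn hpos) (Nat.lt_succ_self m)]

end PartialSum

/-- Seed solutions of the `A_{2n}`-Painlevé system.  Given a composition
`2n+1 = p_0 + ⋯ + p_{k−1}` into `k` positive odd parts, with partial sums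
`q_j = p_0 + ⋯ + p_{j−1}` forming the set `Q = {q_1, …, q_k}`, the tuple defined by
`f_i(z) = z/k`, `α_i = 1/k` if `i+1 ∈ Q` and `f_i = 0`, `α_i = 0` otherwise is a solution
of the `A_{2n}`-Painlevé system with its normalizations `Σ f_i = z` and `Σ α_i = 1`. -/
theorem seed_solution_painleve (n k : ℕ) (hk : 1 ≤ k)
    (p : ℕ → ℕ)
    (hodd : ∀ j < k, Odd (p j))
    (hpos : ∀ j < k, 0 < p j)
    (hsum : ∑ j ∈ Finset.range k, p j = 2 * n + 1)
    (Q : Finset ℕ)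
    (hQ : Q = (Finset.range k).image (fun j => ∑ t ∈ Finset.range (j + 1), p t))
    (f : Fin (2 * n + 1) → ℂ → ℂ) (α : Fin (2 * n + 1) → ℂ)
    (hf : ∀ (i : Fin (2 * n + 1)) (z : ℂ),
      f i z = if (i : ℕ) + 1 ∈ Q then z / (k : ℂ) else 0)
    (hα : ∀ i : Fin (2 * n + 1),
      α i = if (i : ℕ) + 1 ∈ Q then 1 / (k : ℂ) else 0) :
    (∀ (i : Fin (2 * n + 1)) (z : ℂ),
      deriv (f i) z + f i z *
        ((∑ j ∈ Finset.range n, f (i + (Fin.ofNat (2 * n + 1) (2 * j + 1 : ℕ))) z) -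
         (∑ j ∈ Finset.range n, f (i + (Fin.ofNat (2 * n + 1) (2 * j + 2 : ℕ))) z)) = α i) ∧
    (∀ z : ℂ, ∑ i, f i z = z) ∧
    (∑ i, α i = 1) := by
  change Q = (range k).image (partialSum p) at hQ
  have hcount : Nat.count (fun x => x + 1 ∈ Q) (2 * n + 1) = k :=
    hsum ▸ count_add_one_mem_sum_eq_of_partialSum hQ hpos hk
  have hrank := Nat.count_comp_mod_modEq (N := 2 * n + 1) (by omega)
    (fun _ => count_add_one_mem_modEq_of_partialSum hQ hodd hpos)
    (by rw [hcount, ← hsum]; exact (sum_range_modEq_two_of_odd hodd).symm)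
  have hshift (i : Fin (2 * n + 1)) (c : ℕ) (z : ℂ) :
      f (i + Fin.ofNat (2 * n + 1) c) z = if (i + c) % (2 * n + 1) + 1 ∈ Q then z / k else 0 := by
    rw [hf, Fin.val_add, Fin.val_ofNat, Nat.add_mod_mod]
  have hk0 : (k : ℂ) ≠ 0 := by exact_mod_cast (by omega : k ≠ 0)
  refine ⟨fun i z => ?_, fun z => ?_, ?_⟩
  · by_cases hi : (i : ℕ) + 1 ∈ Q
    · have hbalance := Nat.card_filter_odd_eq_card_filter_even hrank (a := i) (n := n)
        (by rwa [Nat.mod_eq_of_lt i.isLt]) (by rwa [Nat.add_mod_right, Nat.mod_eq_of_lt i.isLt])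
      have hfi : f i = fun w => w / (k : ℂ) := funext fun w => by rw [hf, if_pos hi]
      simp only [hshift, ← sum_filter, Finset.sum_const, hbalance, sub_self, mul_zero, add_zero]
      rw [hfi, deriv_div_const, deriv_id'', hα, if_pos hi]
    · have hfi : f i = fun _ => 0 := funext fun w => by rw [hf, if_neg hi]
      simp [hfi, hα, hi]
  · simp only [hf, Fin.sum_ite_eq_count_nsmul (fun x => x + 1 ∈ Q), hcount, nsmul_eq_mul]
    field_simp
  · simp only [hα, Fin.sum_ite_eq_count_nsmul (fun x => x + 1 ∈ Q), hcount, nsmul_eq_mul]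
    field_simp
end
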